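/- arXiv:math/0409538 — 4 statements merged into one kernel-verified Lean document; each statement's English description precedes it below -/
import Mathlib

section
/- Let μ be a partition and D ⊆ {(i,j) ∈ dg(μ) : i > 1}. Let ν(μ,D) = (ν^(1),…,ν^(k)) be the tuple of ribbons where k = μ_1 and ν^(j) is the unique ribbon with cell contents {1,2,…,μ'_j} and descent set {i : (i,j) ∈ D}. Then for every N ≥ 1, F_{μ,D}(x_1,…,x_N;q) := Σ_{σ : dg(μ) → {1,…,N}, Des(σ) = D} q^{|Inv(σ)|} x^σ equals the LLT polynomial G_{ν(μ,D)}(x_1,…,x_N;q) = Σ_{T ∈ SSYT(ν(μ,D)), entries ≤ N} q^{inv(T)} x^T. -/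
open Finset MvPolynomial

namespace HHL

/-! ### Diagrams, fillings and the statistics `inv` and `maj` -/

/-- The cells of the Young diagram of the partition `μ` (given as the list of
its row lengths `μ_1, μ_2, …`); the cell `(i,j)` lies in row `i` (from the
bottom, French style) and column `j`, with `1 ≤ i ≤ ℓ(μ)`, `1 ≤ j ≤ μ_i`. -/
def cells (μ : List ℕ) : Finset (ℕ × ℕ) :=
  (Finset.Icc 1 μ.length ×ˢ Finset.Icc 1 (μ.foldr max 0)).filter
    (fun u => u.2 ≤ μ.getD (u.1 - 1) 0)

/-- `μ` is a partition: a weakly decreasing list of positive integers. -/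
def IsPartitionList (μ : List ℕ) : Prop := μ.Pairwise (· ≥ ·) ∧ ∀ x ∈ μ, 0 < x

/-- The arm of a cell: the number of cells strictly to its right in its row. -/
def arm (μ : List ℕ) (u : ℕ × ℕ) : ℕ :=
  ((cells μ).filter (fun v => v.1 = u.1 ∧ u.2 < v.2)).card

/-- The leg of a cell: the number of cells strictly above it in its column. -/
def leg (μ : List ℕ) (u : ℕ × ℕ) : ℕ :=
  ((cells μ).filter (fun v => v.2 = u.2 ∧ u.1 < v.1)).card

/-- `u` precedes `v` in the reading order (row by row from the top row down,
left to right within each row). -/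
def ReadBefore (u v : ℕ × ℕ) : Prop := v.1 < u.1 ∨ (u.1 = v.1 ∧ u.2 < v.2)

instance (u v : ℕ × ℕ) : Decidable (ReadBefore u v) := by
  unfold ReadBefore; infer_instance

/-- `u` and `v` attack each other and `u` precedes `v` in reading order: either
they are in the same row with `u` to the left, or `u` is one row above `v` and
strictly to its right. -/
def AttackOrd (u v : ℕ × ℕ) : Prop :=
  (u.1 = v.1 ∧ u.2 < v.2) ∨ (u.1 = v.1 + 1 ∧ v.2 < u.2)

instance (u v : ℕ × ℕ) : Decidable (AttackOrd u v) := by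
  unfold AttackOrd; infer_instance

/-- `u` and `v` attack each other. -/
def Attack (u v : ℕ × ℕ) : Prop := AttackOrd u v ∨ AttackOrd v u

instance (u v : ℕ × ℕ) : Decidable (Attack u v) := by
  unfold Attack; infer_instance

section Stats

variable {V : Type} (μ : List ℕ) (Ind : V → V → Prop) [DecidableRel Ind] (σ : ℕ × ℕ → V)

/-- The set `Inv(σ)` of inversions of a filling `σ`, recorded as ordered pairs
`(u,v)` with `u` attacking `v`, `u` preceding `v` in reading order, and
`I(σ(u),σ(v)) = 1`; here `Ind x y` means `I(x,y) = 1` (for ordinary fillings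
`Ind x y ↔ x > y`). -/
def invPairs : Finset ((ℕ × ℕ) × (ℕ × ℕ)) :=
  ((cells μ) ×ˢ (cells μ)).filter fun p => AttackOrd p.1 p.2 ∧ Ind (σ p.1) (σ p.2)

/-- The descent set `Des(σ)`: cells `u = (i+1,j)` with `v = (i,j) ∈ dg(μ)` and
`I(σ(u),σ(v)) = 1`. -/
def desCells : Finset (ℕ × ℕ) :=
  (cells μ).filter fun u => (u.1 - 1, u.2) ∈ cells μ ∧ Ind (σ u) (σ (u.1 - 1, u.2))

/-- `maj(σ) = Σ_{u ∈ Des(σ)} (leg(u) + 1)`. -/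
def majStat : ℕ := ∑ u ∈ desCells μ Ind σ, (leg μ u + 1)

/-- `inv(σ) = |Inv(σ)| − Σ_{u ∈ Des(σ)} arm(u)`. -/
def invStat : ℕ := (invPairs μ Ind σ).card - ∑ u ∈ desCells μ Ind σ, arm μ u

end Stats

/-- For ordinary (positive-integer valued) fillings, `I(x,y) = 1` iff `x > y`. -/
def natInd : ℕ → ℕ → Prop := fun x y => y < x

instance : DecidableRel natInd := fun _ _ => by unfold natInd; infer_instance

/-- Extend a function defined on the cells of `μ` to a total function. -/
def extendF {V : Type} (μ : List ℕ) (d : V) (f : {u // u ∈ cells μ} → V) : ℕ × ℕ → V :=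
  fun u => if h : u ∈ cells μ then f ⟨u, h⟩ else d

/-- A filling of `dg(μ)` with entries in `{1, …, N}`, encoded by a function to
`Fin N` (value `k` means the entry `k + 1`), as a total function `ℕ × ℕ → ℕ`. -/
def natFill (μ : List ℕ) {N : ℕ} (f : {u // u ∈ cells μ} → Fin N) : ℕ × ℕ → ℕ :=
  extendF μ 0 fun u => (f u).val + 1

/-- Haglund's combinatorial formula
`C_μ(x_1,…,x_N;q,t) = Σ_σ q^{inv(σ)} t^{maj(σ)} x^σ`, a polynomial in
`x_1,…,x_N` with coefficients in `ℤ[q,t]`, where `q = C (X 0)`, `t = C (X 1)`. -/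
noncomputable def Cmu (μ : List ℕ) (N : ℕ) :
    MvPolynomial (Fin N) (MvPolynomial (Fin 2) ℤ) :=
  ∑ f : {u // u ∈ cells μ} → Fin N,
    C ((X 0 : MvPolynomial (Fin 2) ℤ) ^ invStat μ natInd (natFill μ f) *
       (X 1 : MvPolynomial (Fin 2) ℤ) ^ majStat μ natInd (natFill μ f)) *
    ∏ u, X (f u)

/-! ### Skew diagrams and LLT polynomials -/

/-- A pair of partitions `(λ, μ)` with `μ ⊆ λ`, representing the skew diagram
`λ∖μ`. -/
def IsSkewPair (p : List ℕ × List ℕ) : Prop :=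
  IsPartitionList p.1 ∧ IsPartitionList p.2 ∧ ∀ i, p.2.getD i 0 ≤ p.1.getD i 0

/-- The cells of the skew diagram `λ∖μ`. -/
def skewCells (p : List ℕ × List ℕ) : Finset (ℕ × ℕ) := cells p.1 \ cells p.2

/-- The content `c(u) = i − j` of the cell `u = (i,j)`. -/
def content (u : ℕ × ℕ) : ℤ := (u.1 : ℤ) - (u.2 : ℤ)

/-- The disjoint union of the cells of a tuple of skew diagrams. -/
abbrev TDom {k : ℕ} (ν : Fin k → List ℕ × List ℕ) : Type :=
  Σ i : Fin k, {u // u ∈ skewCells (ν i)}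

/-- `f` (with `f ⟨i,u⟩` the entry of the `i`-th tableau at the cell `u`) is a
tuple of semistandard Young tableaux: entries weakly increasing along each row
and strictly increasing up each column. -/
def IsSSYTtuple {k : ℕ} (ν : Fin k → List ℕ × List ℕ) (f : TDom ν → ℕ) : Prop :=
  ∀ i : Fin k, ∀ u v : {u // u ∈ skewCells (ν i)},
    (u.1.1 = v.1.1 ∧ u.1.2 ≤ v.1.2 → f ⟨i, u⟩ ≤ f ⟨i, v⟩) ∧
    (u.1.2 = v.1.2 ∧ u.1.1 < v.1.1 → f ⟨i, u⟩ < f ⟨i, v⟩)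

instance {k : ℕ} (ν : Fin k → List ℕ × List ℕ) (f : TDom ν → ℕ) :
    Decidable (IsSSYTtuple ν f) := by unfold IsSSYTtuple; infer_instance

/-- The number of inversions of a tuple of tableaux: pairs of entries
`T^(i)(u) > T^(j)(v)` with either `i < j` and `c(u) = c(v)`, or `i > j` and
`c(u) = c(v) + 1`. -/
def lltInv {k : ℕ} (ν : Fin k → List ℕ × List ℕ) (f : TDom ν → ℕ) : ℕ :=
  (Finset.univ.filter fun p : TDom ν × TDom ν =>
    ((p.1.1 < p.2.1 ∧ content p.1.2.1 = content p.2.2.1) ∨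
     (p.2.1 < p.1.1 ∧ content p.1.2.1 = content p.2.2.1 + 1)) ∧
    f p.2 < f p.1).card

/-- The LLT polynomial `G_ν(x_1,…,x_N;q) = Σ_T q^{inv(T)} x^T` in `N`
variables, with coefficients in `ℤ[q]` (`q = C Polynomial.X`); tableau entries
in `{1,…,N}` are encoded by `Fin N` (value `k` means entry `k + 1`). -/
noncomputable def llt {k : ℕ} (ν : Fin k → List ℕ × List ℕ) (N : ℕ) :
    MvPolynomial (Fin N) (Polynomial ℤ) :=
  ∑ f ∈ Finset.univ.filter (fun f : TDom ν → Fin N =>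
      IsSSYTtuple ν (fun a => (f a).val + 1)),
    C (Polynomial.X ^ lltInv ν (fun a => (f a).val + 1)) * ∏ a, X (f a)

/-! ### The super alphabet -/

/-- The super alphabet `A = {1, 1̄, 2, 2̄, …}`: the letter `(a, b)` has absolute
value `a + 1` and is negative (barred) iff `b = true`. -/
abbrev SLetter : Type := ℕ × Bool

/-- The absolute value of a super letter. -/
def sAbs (x : SLetter) : ℕ := x.1 + 1

/-- The ordering `<₁`: `1 < 1̄ < 2 < 2̄ < ⋯`. -/
def lt1 (x y : SLetter) : Prop :=
  x.1 < y.1 ∨ (x.1 = y.1 ∧ x.2 = false ∧ y.2 = true)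

instance : DecidableRel lt1 := fun _ _ => by unfold lt1; infer_instance

/-- The ordering `<₂`: `1 < 2 < 3 < ⋯ < 3̄ < 2̄ < 1̄`. -/
def lt2 (x y : SLetter) : Prop :=
  (x.2 = false ∧ y.2 = false ∧ x.1 < y.1) ∨ (x.2 = false ∧ y.2 = true) ∨
    (x.2 = true ∧ y.2 = true ∧ y.1 < x.1)

instance : DecidableRel lt2 := fun _ _ => by unfold lt2; infer_instance

/-- Given a total order `lt` on the super alphabet, `IndOf lt x y` holds iff
`I(x,y) = 1`, i.e. `x > y`, or `x = y` is a negative letter. -/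
def IndOf (lt : SLetter → SLetter → Prop) (x y : SLetter) : Prop :=
  lt y x ∨ (x = y ∧ x.2 = true)

instance (lt : SLetter → SLetter → Prop) [DecidableRel lt] : DecidableRel (IndOf lt) :=
  fun _ _ => by unfold IndOf; infer_instance

/-- A super filling of `dg(μ)` with letters of absolute value at most `N`, as a
total function (the value `(a, b)` with `a : Fin N` means the letter of
absolute value `a + 1`, barred iff `b`). -/
def superFill (μ : List ℕ) {N : ℕ} (f : {u // u ∈ cells μ} → Fin N × Bool) :
    ℕ × ℕ → SLetter :=
  extendF μ (0, false) fun u => ((f u).1.val, (f u).2)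

/-- A super filling with entries in `{1, 1̄}` (`f u = true` means entry `1̄`). -/
def boolFill (μ : List ℕ) (f : {u // u ∈ cells μ} → Bool) : ℕ × ℕ → SLetter :=
  extendF μ (0, false) fun u => ((0 : ℕ), f u)

/-- `m(σ)`: the number of negative entries of a super filling. -/
def negCount (μ : List ℕ) (σ : ℕ × ℕ → SLetter) : ℕ :=
  ((cells μ).filter fun u => (σ u).2 = true).card

/-- `p(σ)`: the number of positive entries of a super filling. -/
def posCount (μ : List ℕ) (σ : ℕ × ℕ → SLetter) : ℕ :=
  ((cells μ).filter fun u => (σ u).2 = false).card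

/-- A super filling is non-attacking if entries in attacking cells have
distinct absolute values. -/
def NonAttacking (μ : List ℕ) (σ : ℕ × ℕ → SLetter) : Prop :=
  ∀ u ∈ cells μ, ∀ v ∈ cells μ, Attack u v → sAbs (σ u) ≠ sAbs (σ v)

instance (μ : List ℕ) (σ : ℕ × ℕ → SLetter) : Decidable (NonAttacking μ σ) := by
  unfold NonAttacking; infer_instance

/-! ### Conjugate partitions, ribbons, connectivity -/

/-- `conj μ j = μ'_j`, the number of rows of `μ` of length at least `j`. -/
def conj (μ : List ℕ) (j : ℕ) : ℕ :=
  ((Finset.range μ.length).filter fun i => j ≤ μ.getD i 0).card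

/-- The transpose `μ'` of a partition, as a list. -/
def conjList (μ : List ℕ) : List ℕ :=
  (List.range (μ.foldr max 0)).map fun j => conj μ (j + 1)

/-- Transpose of a skew shape: `λ∖μ ↦ λ'∖μ'`. -/
def transposePair (p : List ℕ × List ℕ) : List ℕ × List ℕ :=
  (conjList p.1, conjList p.2)

/-- Two cells are adjacent (share an edge). -/
def AdjCell (u v : ℕ × ℕ) : Prop :=
  (u.1 = v.1 ∧ (u.2 = v.2 + 1 ∨ v.2 = u.2 + 1)) ∨
  (u.2 = v.2 ∧ (u.1 = v.1 + 1 ∨ v.1 = u.1 + 1))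

/-- A set of cells is connected (any two cells are joined by a path of
edge-adjacent cells inside the set). -/
def ConnSet (s : Finset (ℕ × ℕ)) : Prop :=
  ∀ u ∈ s, ∀ v ∈ s, Relation.ReflTransGen (fun a b => a ∈ s ∧ b ∈ s ∧ AdjCell a b) u v

/-- A set of cells contains no 2×2 block. -/
def No2x2 (s : Finset (ℕ × ℕ)) : Prop :=
  ¬ ∃ i j, (i, j) ∈ s ∧ (i + 1, j) ∈ s ∧ (i, j + 1) ∈ s ∧ (i + 1, j + 1) ∈ s

/-! ### Reading words and cocharge -/

/-- Boolean comparison realizing the reading order. -/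
def readLe (u v : ℕ × ℕ) : Bool :=
  decide (v.1 < u.1) || (decide (u.1 = v.1) && decide (u.2 ≤ v.2))

/-- The reading word of a filling `σ` of `dg(μ)`: its entries listed in reading
order. -/
noncomputable def readingWord (μ : List ℕ) (σ : ℕ × ℕ → ℕ) : List ℕ :=
  ((cells μ).toList.mergeSort readLe).map σ

/-- Boolean comparison for the cocharge-word ordering of the cells: entries of
`σ` decreasing and, within constant segments of `σ`, cells in decreasing
reading order. -/
def cwordLe (σ : ℕ × ℕ → ℕ) (u v : ℕ × ℕ) : Bool :=
  decide (σ v < σ u) ||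
    (decide (σ u = σ v) &&
      (decide (u.1 < v.1) || (decide (u.1 = v.1) && decide (v.2 ≤ u.2))))

/-- The cocharge word of a filling: the row indices of the cells, listed so that
the entries are decreasing, with ties broken by decreasing reading order. -/
noncomputable def cword (μ : List ℕ) (σ : ℕ × ℕ → ℕ) : List ℕ :=
  ((cells μ).toList.mergeSort (cwordLe σ)).map Prod.fst

/-- Cocharge of a word that is a permutation of `{1,…,n}`:
`Σ_{i ∈ D(w⁻¹)} (n − i)`, where `i ∈ D(w⁻¹)` iff `i + 1` occurs before `i`. -/
def cochargePerm (w : List ℕ) : ℕ :=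
  ∑ i ∈ Finset.Icc 1 (w.length - 1),
    if w.idxOf (i + 1) < w.idxOf i then w.length - i else 0

/-- The (0-based) positions of the letter `a` in `w`. -/
def letterPositions (w : List ℕ) (a : ℕ) : Finset ℕ :=
  (Finset.range w.length).filter fun k => w.getD k 0 = a

/-- The position `k_i` for the letter `a`: the rightmost occurrence of `a`
strictly to the left of `bound` if there is one, otherwise the rightmost
occurrence of `a`. -/
def choosePos (w : List ℕ) (a : ℕ) (bound : Option ℕ) : Option ℕ :=
  match bound with
  | none => (letterPositions w a).max
  | some b =>
      let s := (letterPositions w a).filter (· < b)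
      if s.Nonempty then s.max else (letterPositions w a).max

/-- `posListAux w i = [k_i, k_{i-1}, …, k_1]` (as options). -/
def posListAux (w : List ℕ) : ℕ → List (Option ℕ)
  | 0 => []
  | i + 1 =>
      let rest := posListAux w i
      choosePos w (i + 1) (rest.headD none) :: rest

/-- The set `S = {k_1, …, k_l}` of positions extracted in the cocharge
recursion, where `l` is the largest letter of `w`. -/
def extractSet (w : List ℕ) : Finset ℕ :=
  ((posListAux w (w.foldr max 0)).filterMap id).toFinset

/-- The subword of `w` at the positions in `S` (in increasing position order). -/
def subwordOn (w : List ℕ) (S : Finset ℕ) : List ℕ :=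
  ((List.range w.length).filter fun k => decide (k ∈ S)).map fun k => w.getD k 0

/-- The subword of `w` at the positions *not* in `S`. -/
def subwordOff (w : List ℕ) (S : Finset ℕ) : List ℕ :=
  ((List.range w.length).filter fun k => decide (k ∉ S)).map fun k => w.getD k 0

/-- Fuelled cocharge recursion: `cocharge w = cocharge y + cocharge z`, where
`y` is the extracted subword (a permutation of `{1,…,l}`) and `z` is the
complementary subword. -/
def cochargeAux : ℕ → List ℕ → ℕ
  | 0, _ => 0
  | fuel + 1, w =>
      let S := extractSet w
      let z := subwordOff w S
      if z.length < w.length then cochargePerm (subwordOn w S) + cochargeAux fuel z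
      else cochargePerm (subwordOn w S)

/-- The cocharge of a word of partition content. -/
def cocharge (w : List ℕ) : ℕ := cochargeAux w.length w

/-! ### Yamanouchi words and crystal operators -/

/-- A word is Yamanouchi if every final segment contains at least as many
letters `i` as letters `i + 1`, for every `i ≥ 1`. -/
def IsYamanouchi (w : List ℕ) : Prop :=
  ∀ k i, ((w.drop k).count (i + 2)) ≤ ((w.drop k).count (i + 1))

noncomputable instance : DecidablePred IsYamanouchi := fun _ => Classical.propDecidable _

/-- The letters `i` (close, `false`) and `i + 1` (open, `true`) of `w`, as a
list of (position, is-open) tokens in position order. -/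
def tokens (i : ℕ) (w : List ℕ) : List (ℕ × Bool) :=
  (List.range w.length).filterMap fun k =>
    if w.getD k 0 = i + 1 then some (k, true)
    else if w.getD k 0 = i then some (k, false) else none

/-- Stack pass performing the repeated deletion of adjacent matched pairs (an
`i + 1` immediately followed by an `i` in the current subword). The first
argument is the (reversed) list of surviving tokens so far. -/
def reduceTokens : List (ℕ × Bool) → List (ℕ × Bool) → List (ℕ × Bool)
  | acc, [] => acc.reverse
  | a :: acc', t :: rest =>
      if a.2 ∧ ¬ t.2 then reduceTokens acc' rest
      else reduceTokens (t :: a :: acc') rest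
  | [], t :: rest => reduceTokens [t] rest

/-- The surviving letters of `{i, i + 1}` in `w` after matched-pair deletion. -/
def survivors (i : ℕ) (w : List ℕ) : List (ℕ × Bool) := reduceTokens [] (tokens i w)

/-- The crystal raising operator `E_i` on words: change the first surviving
(unmatched) letter `i + 1` to `i`; `none` encodes `E_i w = 0`. -/
def crystalE (i : ℕ) (w : List ℕ) : Option (List ℕ) :=
  match (survivors i w).find? (fun t => t.2) with
  | none => none
  | some t => some (w.set t.1 i)

/-! ### Straight-shape tableaux and Schur polynomials -/

/-- Semistandard tableau condition for a filling of the cells of `lam`. -/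
def IsSSYTcells (lam : List ℕ) (T : {u // u ∈ cells lam} → ℕ) : Prop :=
  ∀ u v : {u // u ∈ cells lam},
    (u.1.1 = v.1.1 ∧ u.1.2 ≤ v.1.2 → T u ≤ T v) ∧
    (u.1.2 = v.1.2 ∧ u.1.1 < v.1.1 → T u < T v)

instance (lam : List ℕ) (T : {u // u ∈ cells lam} → ℕ) :
    Decidable (IsSSYTcells lam T) := by unfold IsSSYTcells; infer_instance

/-- The Schur polynomial `s_λ(x_1,…,x_N) = Σ_{T ∈ SSYT(λ), entries ≤ N} x^T`,
with coefficients in a commutative ring `R`. -/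
noncomputable def schurPoly (R : Type) [CommRing R] (lam : List ℕ) (N : ℕ) :
    MvPolynomial (Fin N) R :=
  ∑ T ∈ Finset.univ.filter (fun T : {u // u ∈ cells lam} → Fin N =>
      IsSSYTcells lam (fun u => (T u).val + 1)),
    ∏ u, X (T u)

/-- The decreasing list of parts of `p : Nat.Partition n`. -/
def partnList {n : ℕ} (p : n.Partition) : List ℕ :=
  (Multiset.sort p.parts (· ≤ ·)).reverse


/-- `F_{μ,D}(x_1,…,x_N;q) = Σ_{σ : dg(μ)→{1,…,N}, Des(σ) = D} q^{|Inv(σ)|} x^σ`,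
with coefficients in `ℤ[q]`. -/
noncomputable def Fmu (μ : List ℕ) (D : Finset (ℕ × ℕ)) (N : ℕ) :
    MvPolynomial (Fin N) (Polynomial ℤ) :=
  ∑ f ∈ Finset.univ.filter (fun f : {u // u ∈ cells μ} → Fin N =>
      desCells μ natInd (natFill μ f) = D),
    C (Polynomial.X ^ (invPairs μ natInd (natFill μ f)).card) * ∏ u, X (f u)

/-- `p` is a ribbon (a connected skew diagram with no 2×2 block) positioned so
that its cell contents are exactly `1, 2, …, m`. -/
def IsRibbonWithContents (p : List ℕ × List ℕ) (m : ℕ) : Prop :=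
  IsSkewPair p ∧ ConnSet (skewCells p) ∧ No2x2 (skewCells p) ∧
    (skewCells p).card = m ∧ (skewCells p).image content = Finset.Icc (1 : ℤ) (m : ℤ)

/-- The descent set of a ribbon: the contents of the cells `u = (i,j)` such
that `(i−1,j)` also belongs to the ribbon. -/
def ribbonDes (p : List ℕ × List ℕ) : Finset ℤ :=
  ((skewCells p).filter fun u => (u.1 - 1, u.2) ∈ skewCells p).image content

/-!
Send the cell `u` of the ribbon `ν^(j)` to the cell `(c(u), j)` of `dg(μ)`. Since the contents of
`ν^(j)` are exactly `1, …, μ'_j`, this is a bijection, and a tuple of fillings of the ribbons becomes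
a filling `σ` of `dg(μ)` whose `j`-th column, read upwards, is `ν^(j)` read by increasing content.
Cells of equal content in ribbons `i < j`, or of contents `c + 1` and `c` in ribbons `i > j`, go
exactly to the attacking pairs of `dg(μ)` in reading order, so the LLT inversions are the
inversions of `σ`. In a ribbon the cells of contents `c - 1` and `c` lie either one above the other
(when `c` is a descent) or side by side in a row, so a filling is semistandard iff it increases
strictly from `c - 1` to `c` exactly at the descents `c`; column by column, this says `Des(σ) = D`.
-/

lemma mem_cells {μ : List ℕ} {u : ℕ × ℕ} :
    u ∈ cells μ ↔ 1 ≤ u.1 ∧ u.1 ≤ μ.length ∧ 1 ≤ u.2 ∧ u.2 ≤ μ.getD (u.1 - 1) 0 := by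
  simp only [cells, Finset.mem_filter, Finset.mem_product, Finset.mem_Icc]
  constructor
  · rintro ⟨⟨⟨h1, h2⟩, h3, -⟩, h4⟩
    exact ⟨h1, h2, h3, h4⟩
  · rintro ⟨h1, h2, h3, h4⟩
    have hlt : u.1 - 1 < μ.length := by omega
    refine ⟨⟨⟨h1, h2⟩, h3, List.le_max_of_le' 0 (List.getElem_mem hlt) ?_⟩, h4⟩
    rwa [List.getD_eq_getElem _ _ hlt] at h4

lemma mem_iff_lt_card_of_isLowerSet {s : Finset ℕ} (hs : IsLowerSet (s : Set ℕ)) (i : ℕ) :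
    i ∈ s ↔ i < s.card := by
  constructor
  · intro hi
    have : Finset.range (i + 1) ⊆ s := fun j hj =>
      hs (Nat.lt_succ_iff.mp (Finset.mem_range.mp hj)) hi
    simpa using Finset.card_le_card this
  · intro hlt
    by_contra hi
    have : s ⊆ Finset.range i := fun j hj =>
      Finset.mem_range.mpr (lt_of_not_ge fun hij => hi (hs hij hj))
    exact absurd hlt (not_lt.mpr (by simpa using Finset.card_le_card this))

lemma lt_conj_iff {μ : List ℕ} (hμ : IsPartitionList μ) (i j : ℕ) :
    i < conj μ j ↔ i < μ.length ∧ j ≤ μ.getD i 0 := by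
  have hlower : IsLowerSet
      (((Finset.range μ.length).filter fun i => j ≤ μ.getD i 0 : Finset ℕ) : Set ℕ) := by
    intro a b hba ha
    simp only [Finset.coe_filter, Finset.mem_range, Set.mem_ofPred_eq] at ha ⊢
    have hb : b < μ.length := hba.trans_lt ha.1
    refine ⟨hb, ha.2.trans ?_⟩
    rw [List.getD_eq_getElem _ _ ha.1, List.getD_eq_getElem _ _ hb]
    exact hμ.1.rel_get_of_le (a := ⟨b, hb⟩) (b := ⟨a, ha.1⟩) hba
  rw [conj, ← mem_iff_lt_card_of_isLowerSet hlower, Finset.mem_filter, Finset.mem_range]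

lemma mem_cells_iff_le_conj {μ : List ℕ} (hμ : IsPartitionList μ) {u : ℕ × ℕ} :
    u ∈ cells μ ↔ 1 ≤ u.1 ∧ 1 ≤ u.2 ∧ u.1 ≤ conj μ u.2 := by
  have := lt_conj_iff hμ (u.1 - 1) u.2
  rw [mem_cells]
  omega

lemma forall_mem_cells_iff {μ : List ℕ} (hμ : IsPartitionList μ) {k : ℕ}
    (hk : k = μ.getD 0 0) (P : ℕ × ℕ → Prop) :
    (∀ x ∈ cells μ, P x) ↔ ∀ j : Fin k, ∀ i, 1 ≤ i → i ≤ conj μ (j.val + 1) → P (i, j.val + 1) := by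
  constructor
  · intro h j i h1 h2
    exact h _ ((mem_cells_iff_le_conj hμ).mpr ⟨h1, by omega, h2⟩)
  · intro h x hx
    have hx' := (mem_cells_iff_le_conj hμ).mp hx
    have hcol := ((lt_conj_iff hμ 0 x.2).mp (by omega)).2
    obtain ⟨j, hj⟩ : ∃ j : Fin k, j.val + 1 = x.2 := ⟨⟨x.2 - 1, by omega⟩, by simp; omega⟩
    simpa [hj] using h j x.1 hx'.1 (by rw [hj]; exact hx'.2.2)

lemma mem_desCells_natInd_iff {μ : List ℕ} (hμ : IsPartitionList μ) {σ : ℕ × ℕ → ℕ}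
    {x : ℕ × ℕ} :
    x ∈ desCells μ natInd σ ↔ x ∈ cells μ ∧ 2 ≤ x.1 ∧ σ (x.1 - 1, x.2) < σ x := by
  unfold desCells natInd
  rw [Finset.mem_filter, mem_cells_iff_le_conj hμ, mem_cells_iff_le_conj hμ]
  dsimp only
  omega

lemma desCells_natInd_eq_iff {μ : List ℕ} (hμ : IsPartitionList μ) {D : Finset (ℕ × ℕ)}
    (hD : ∀ u ∈ D, u ∈ cells μ ∧ 2 ≤ u.1) (σ : ℕ × ℕ → ℕ) :
    desCells μ natInd σ = D ↔ ∀ x ∈ cells μ, 2 ≤ x.1 → (x ∈ D ↔ σ (x.1 - 1, x.2) < σ x) := by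
  simp only [Finset.ext_iff, mem_desCells_natInd_iff hμ]
  constructor
  · intro h x hx h2
    rw [← h]
    simp [hx, h2]
  · intro h x
    constructor
    · rintro ⟨hx, h2, hlt⟩
      exact (h x hx h2).mpr hlt
    · intro hxD
      obtain ⟨hx, h2⟩ := hD x hxD
      exact ⟨hx, h2, (h x hx h2).mp hxD⟩

lemma AdjCell.content_eq {a b : ℕ × ℕ} (h : AdjCell a b) :
    content b = content a + 1 ∨ content a = content b + 1 := by
  unfold AdjCell at h
  unfold content
  omega

lemma pos_of_mem_skewCells {p : List ℕ × List ℕ} {u : ℕ × ℕ} (hu : u ∈ skewCells p) :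
    1 ≤ u.1 ∧ 1 ≤ u.2 := by
  have := mem_cells.mp (Finset.mem_sdiff.mp hu).1
  exact ⟨this.1, this.2.2.1⟩

def IsSemistandardOn {β : Type*} [Preorder β] (s : Finset (ℕ × ℕ)) (T : ℕ × ℕ → β) : Prop :=
  ∀ u ∈ s, ∀ v ∈ s, (u.1 = v.1 ∧ u.2 ≤ v.2 → T u ≤ T v) ∧ (u.2 = v.2 ∧ u.1 < v.1 → T u < T v)

namespace IsRibbonWithContents

variable {p : List ℕ × List ℕ} {m : ℕ}

lemma injOn_content (hp : IsRibbonWithContents p m) : Set.InjOn content (skewCells p) := by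
  apply Finset.injOn_of_card_image_eq
  rw [hp.2.2.2.2, hp.2.2.2.1, Int.card_Icc]
  omega

lemma content_mem_Icc (hp : IsRibbonWithContents p m) {u : ℕ × ℕ} (hu : u ∈ skewCells p) :
    1 ≤ content u ∧ content u ≤ m := by
  simpa [hp.2.2.2.2] using Finset.mem_image_of_mem content hu

lemma exists_content_eq (hp : IsRibbonWithContents p m) {c : ℤ} (h1 : 1 ≤ c) (h2 : c ≤ m) :
    ∃ u ∈ skewCells p, content u = c := by
  have : c ∈ (skewCells p).image content := by
    rw [hp.2.2.2.2]
    exact Finset.mem_Icc.mpr ⟨h1, h2⟩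
  simpa using this

/-- A path inside the ribbon from `u` to `w` must cross from content `c(u)` to `c(u) + 1`
along an edge, and the cells of a given content are unique. -/
lemma adjCell_of_content_eq_add_one (hp : IsRibbonWithContents p m) {u w : ℕ × ℕ}
    (hu : u ∈ skewCells p) (hw : w ∈ skewCells p) (hc : content w = content u + 1) :
    AdjCell u w := by
  have crossing : ∀ x, Relation.ReflTransGen
      (fun a b => a ∈ skewCells p ∧ b ∈ skewCells p ∧ AdjCell a b) u x →
      content x ≤ content u ∨ ∃ a ∈ skewCells p, ∃ b ∈ skewCells p,
        AdjCell a b ∧ content a = content u ∧ content b = content u + 1 := by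
    intro x hx
    induction hx with
    | refl => exact Or.inl le_rfl
    | @tail y z _ hyz ih =>
      obtain ⟨hy, hz, hadj⟩ := hyz
      rcases ih with hle | hcross
      · rcases hadj.content_eq with h | h
        · by_cases hzu : content z ≤ content u
          · exact Or.inl hzu
          · exact Or.inr ⟨y, hy, z, hz, hadj, by omega, by omega⟩
        · exact Or.inl (by omega)
      · exact Or.inr hcross
  rcases crossing w (hp.2.1 u hu w hw) with hle | ⟨a, ha, b, hb, hadj, hau, hbw⟩
  · omega
  · rwa [hp.injOn_content ha hu hau, hp.injOn_content hb hw (hbw.trans hc.symm)] at hadj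

lemma eq_above_or_eq_left (hp : IsRibbonWithContents p m) {u w : ℕ × ℕ}
    (hu : u ∈ skewCells p) (hw : w ∈ skewCells p) (hc : content w = content u + 1) :
    w = (u.1 + 1, u.2) ∨ u = (w.1, w.2 + 1) := by
  have hadj := hp.adjCell_of_content_eq_add_one hu hw hc
  unfold AdjCell at hadj
  unfold content at hc
  simp only [Prod.ext_iff]
  omega

lemma le_of_content_le (hp : IsRibbonWithContents p m) {u v : ℕ × ℕ}
    (hu : u ∈ skewCells p) (hv : v ∈ skewCells p) (hc : content u ≤ content v) :
    u.1 ≤ v.1 ∧ v.2 ≤ u.2 := by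
  obtain ⟨d, hd⟩ := Int.eq_ofNat_of_zero_le (sub_nonneg.mpr hc)
  induction d generalizing v with
  | zero =>
    rw [hp.injOn_content hv hu (by omega)]
    exact ⟨le_rfl, le_rfl⟩
  | succ d ih =>
    have hcu := hp.content_mem_Icc hu
    have hcv := hp.content_mem_Icc hv
    obtain ⟨w, hw, hwc⟩ := hp.exists_content_eq (c := content u + d) (by omega) (by omega)
    have huw := ih hw (by omega) (by omega)
    rcases hp.eq_above_or_eq_left hw hv (by omega) with rfl | rfl
    · exact ⟨by simp only; omega, huw.2⟩
    · exact ⟨huw.1, by omega⟩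

lemma content_mem_ribbonDes_iff (hp : IsRibbonWithContents p m) {u w : ℕ × ℕ}
    (hu : u ∈ skewCells p) (hw : w ∈ skewCells p) (hc : content w = content u + 1) :
    content w ∈ ribbonDes p ↔ w = (u.1 + 1, u.2) := by
  have hw1 := (pos_of_mem_skewCells hw).1
  simp only [ribbonDes, Finset.mem_image, Finset.mem_filter]
  constructor
  · rintro ⟨w', ⟨hw', hbelow⟩, hw'c⟩
    obtain rfl := hp.injOn_content hw' hw hw'c
    have hbelow_eq : (w'.1 - 1, w'.2) = u :=
      hp.injOn_content hbelow hu (by unfold content at hc ⊢; dsimp only; omega)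
    rw [← hbelow_eq, Prod.ext_iff]
    dsimp only
    omega
  · rintro rfl
    exact ⟨_, ⟨hw, by simpa using hu⟩, rfl⟩

variable {β : Type*} [LinearOrder β] {t : ℤ → β}

lemma lt_of_content_eq_add_one_of_col_eq (hp : IsRibbonWithContents p m)
    (hdes : ∀ c : ℤ, 2 ≤ c → c ≤ m → (c ∈ ribbonDes p ↔ t (c - 1) < t c)) {a w : ℕ × ℕ}
    (ha : a ∈ skewCells p) (hw : w ∈ skewCells p) (hc : content w = content a + 1)
    (hcol : a.2 = w.2) : t (content a) < t (content w) := by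
  have hca := hp.content_mem_Icc ha
  have hcw := hp.content_mem_Icc hw
  have habove : w = (a.1 + 1, a.2) := by
    rcases hp.eq_above_or_eq_left ha hw hc with h | h
    · exact h
    · rw [h] at hcol
      omega
  have key := (hdes (content w) (by omega) hcw.2).mp
    ((hp.content_mem_ribbonDes_iff ha hw hc).mpr habove)
  rw [hc, add_sub_cancel_right] at key
  rwa [hc]

lemma le_of_content_eq_add_one_of_row_eq (hp : IsRibbonWithContents p m)
    (hdes : ∀ c : ℤ, 2 ≤ c → c ≤ m → (c ∈ ribbonDes p ↔ t (c - 1) < t c)) {a w : ℕ × ℕ}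
    (ha : a ∈ skewCells p) (hw : w ∈ skewCells p) (hc : content w = content a + 1)
    (hrow : a.1 = w.1) : t (content w) ≤ t (content a) := by
  have hca := hp.content_mem_Icc ha
  have hcw := hp.content_mem_Icc hw
  have hnotabove : w ≠ (a.1 + 1, a.2) := fun h => by rw [h] at hrow; omega
  have key := mt (hdes (content w) (by omega) hcw.2).mpr
    (mt (hp.content_mem_ribbonDes_iff ha hw hc).mp hnotabove)
  rw [not_lt, hc, add_sub_cancel_right] at key
  rwa [hc]

lemma le_of_row_eq (hp : IsRibbonWithContents p m)
    (hdes : ∀ c : ℤ, 2 ≤ c → c ≤ m → (c ∈ ribbonDes p ↔ t (c - 1) < t c)) {u v : ℕ × ℕ}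
    (hu : u ∈ skewCells p) (hv : v ∈ skewCells p) (hrow : u.1 = v.1)
    (hc : content v ≤ content u) : t (content u) ≤ t (content v) := by
  obtain ⟨d, hd⟩ := Int.eq_ofNat_of_zero_le (sub_nonneg.mpr hc)
  induction d generalizing u with
  | zero => rw [hp.injOn_content hu hv (by omega)]
  | succ d ih =>
    have hcu := hp.content_mem_Icc hu
    have hcv := hp.content_mem_Icc hv
    obtain ⟨w, hw, hwc⟩ := hp.exists_content_eq (c := content v + d) (by omega) (by omega)
    have hvw := hp.le_of_content_le hv hw (by omega)
    have hwu := hp.le_of_content_le hw hu (by omega)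
    calc t (content u) ≤ t (content w) :=
          hp.le_of_content_eq_add_one_of_row_eq hdes hw hu (by omega) (by omega)
      _ ≤ t (content v) := ih hw (by omega) (by omega) (by omega)

lemma lt_of_col_eq (hp : IsRibbonWithContents p m)
    (hdes : ∀ c : ℤ, 2 ≤ c → c ≤ m → (c ∈ ribbonDes p ↔ t (c - 1) < t c)) {u v : ℕ × ℕ}
    (hu : u ∈ skewCells p) (hv : v ∈ skewCells p) (hcol : u.2 = v.2)
    (hc : content u < content v) : t (content u) < t (content v) := by
  obtain ⟨d, hd⟩ := Int.eq_ofNat_of_zero_le (by omega : 0 ≤ content v - content u - 1)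
  induction d generalizing v with
  | zero => exact hp.lt_of_content_eq_add_one_of_col_eq hdes hu hv (by omega) hcol
  | succ d ih =>
    have hcu := hp.content_mem_Icc hu
    have hcv := hp.content_mem_Icc hv
    obtain ⟨w, hw, hwc⟩ := hp.exists_content_eq (c := content u + d + 1) (by omega) (by omega)
    have huw := hp.le_of_content_le hu hw (by omega)
    have hwv := hp.le_of_content_le hw hv (by omega)
    calc t (content u) < t (content w) := ih hw (by omega) (by omega) (by omega)
      _ < t (content v) :=
          hp.lt_of_content_eq_add_one_of_col_eq hdes hw hv (by omega) (by omega)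

theorem isSemistandardOn_iff (hp : IsRibbonWithContents p m) :
    IsSemistandardOn (skewCells p) (fun u => t (content u)) ↔
      ∀ c : ℤ, 2 ≤ c → c ≤ m → (c ∈ ribbonDes p ↔ t (c - 1) < t c) := by
  constructor
  · intro hT c hc2 hcm
    obtain ⟨a, ha, hac⟩ := hp.exists_content_eq (c := c - 1) (by omega) (by omega)
    obtain ⟨w, hw, hwc⟩ := hp.exists_content_eq (c := c) (by omega) hcm
    have hstep : content w = content a + 1 := by omega
    subst hwc
    rw [← hac, hp.content_mem_ribbonDes_iff ha hw hstep]
    rcases hp.eq_above_or_eq_left ha hw hstep with rfl | rfl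
    · exact iff_of_true rfl ((hT _ ha _ hw).2 ⟨rfl, by simp⟩)
    · refine iff_of_false (fun h => by simp [Prod.ext_iff] at h) (not_lt.mpr ?_)
      exact (hT _ hw _ ha).1 ⟨rfl, by simp⟩
  · intro hdes u hu v hv
    constructor
    · rintro ⟨hrow, hcol⟩
      exact hp.le_of_row_eq hdes hu hv hrow (by unfold content; omega)
    · rintro ⟨hcol, hrow⟩
      exact hp.lt_of_col_eq hdes hu hv hcol (by unfold content; omega)

end IsRibbonWithContents

def diagCell {k : ℕ} (ν : Fin k → List ℕ × List ℕ) (a : TDom ν) : ℕ × ℕ :=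
  ((content a.2.1).toNat, a.1.val + 1)

section RibbonTuple

variable {μ : List ℕ} {k : ℕ} {ν : Fin k → List ℕ × List ℕ}

lemma diagCell_mem_cells (hμ : IsPartitionList μ)
    (hrib : ∀ j : Fin k, IsRibbonWithContents (ν j) (conj μ (j.val + 1))) (a : TDom ν) :
    diagCell ν a ∈ cells μ := by
  have hc := (hrib a.1).content_mem_Icc a.2.2
  rw [mem_cells_iff_le_conj hμ, diagCell]
  dsimp only
  omega

lemma diagCell_injective (hrib : ∀ j : Fin k, IsRibbonWithContents (ν j) (conj μ (j.val + 1))) :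
    Function.Injective (diagCell ν) := by
  rintro ⟨j, u, hu⟩ ⟨j', v, hv⟩ h
  simp only [diagCell, Prod.mk.injEq] at h
  obtain rfl : j = j' := Fin.ext (by omega)
  have hcu := (hrib j).content_mem_Icc hu
  have hcv := (hrib j).content_mem_Icc hv
  obtain rfl := (hrib j).injOn_content hu hv (by omega)
  rfl

lemma exists_diagCell_eq (hμ : IsPartitionList μ) (hk : k = μ.getD 0 0)
    (hrib : ∀ j : Fin k, IsRibbonWithContents (ν j) (conj μ (j.val + 1))) {x : ℕ × ℕ}
    (hx : x ∈ cells μ) : ∃ a, diagCell ν a = x := by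
  refine (forall_mem_cells_iff hμ hk fun x => ∃ a, diagCell ν a = x).mpr (fun j i h1 h2 => ?_) x hx
  obtain ⟨u, hu, hc⟩ := (hrib j).exists_content_eq (c := i) (by omega) (by omega)
  exact ⟨⟨j, u, hu⟩, by simp [diagCell, hc]⟩

noncomputable def diagCellEquiv (hμ : IsPartitionList μ) (hk : k = μ.getD 0 0)
    (hrib : ∀ j : Fin k, IsRibbonWithContents (ν j) (conj μ (j.val + 1))) :
    TDom ν ≃ {u // u ∈ cells μ} :=
  Equiv.ofBijective (fun a => ⟨diagCell ν a, diagCell_mem_cells hμ hrib a⟩)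
    ⟨fun _ _ h => diagCell_injective hrib (congrArg Subtype.val h),
      fun x => (exists_diagCell_eq hμ hk hrib x.2).imp fun _ h => Subtype.ext h⟩

lemma attackOrd_diagCell_iff
    (hrib : ∀ j : Fin k, IsRibbonWithContents (ν j) (conj μ (j.val + 1))) (a b : TDom ν) :
    AttackOrd (diagCell ν a) (diagCell ν b) ↔
      (a.1 < b.1 ∧ content a.2.1 = content b.2.1) ∨
        (b.1 < a.1 ∧ content a.2.1 = content b.2.1 + 1) := by
  have hca := (hrib a.1).content_mem_Icc a.2.2
  have hcb := (hrib b.1).content_mem_Icc b.2.2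
  simp only [AttackOrd, diagCell, Fin.lt_def]
  omega

theorem lltInv_comp_diagCell (hμ : IsPartitionList μ) (hk : k = μ.getD 0 0)
    (hrib : ∀ j : Fin k, IsRibbonWithContents (ν j) (conj μ (j.val + 1))) (σ : ℕ × ℕ → ℕ) :
    lltInv ν (fun a => σ (diagCell ν a)) = (invPairs μ natInd σ).card := by
  refine Finset.card_bij (fun q _ => (diagCell ν q.1, diagCell ν q.2)) ?_ ?_ ?_
  · intro q hq
    simp only [Finset.mem_filter, Finset.mem_univ, true_and] at hq
    rw [invPairs, Finset.mem_filter, Finset.mem_product, attackOrd_diagCell_iff hrib]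
    exact ⟨⟨diagCell_mem_cells hμ hrib _, diagCell_mem_cells hμ hrib _⟩, hq⟩
  · intro q _ q' _ h
    simp only [Prod.mk.injEq] at h
    exact Prod.ext (diagCell_injective hrib h.1) (diagCell_injective hrib h.2)
  · rintro ⟨x, y⟩ hxy
    rw [invPairs, Finset.mem_filter, Finset.mem_product] at hxy
    obtain ⟨⟨hx, hy⟩, hatt, hlt⟩ := hxy
    obtain ⟨a, rfl⟩ := exists_diagCell_eq hμ hk hrib hx
    obtain ⟨b, rfl⟩ := exists_diagCell_eq hμ hk hrib hy
    refine ⟨(a, b), ?_, rfl⟩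
    simp only [Finset.mem_filter, Finset.mem_univ, true_and]
    exact ⟨(attackOrd_diagCell_iff hrib a b).mp hatt, hlt⟩

theorem isSSYTtuple_comp_diagCell_iff (hμ : IsPartitionList μ) {D : Finset (ℕ × ℕ)}
    (hD : ∀ u ∈ D, u ∈ cells μ ∧ 2 ≤ u.1) (hk : k = μ.getD 0 0)
    (hrib : ∀ j : Fin k, IsRibbonWithContents (ν j) (conj μ (j.val + 1)))
    (hdes : ∀ j : Fin k, ribbonDes (ν j) =
      (D.filter fun u => u.2 = j.val + 1).image (fun u => (u.1 : ℤ)))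
    (σ : ℕ × ℕ → ℕ) :
    IsSSYTtuple ν (fun a => σ (diagCell ν a)) ↔ desCells μ natInd σ = D := by
  have hcolumns : IsSSYTtuple ν (fun a => σ (diagCell ν a)) ↔ ∀ j : Fin k,
      IsSemistandardOn (skewCells (ν j)) (fun u => σ ((content u).toNat, j.val + 1)) := by
    simp only [IsSSYTtuple, IsSemistandardOn, Subtype.forall]
    rfl
  have hmemD : ∀ (j : Fin k) (i : ℕ), (i, j.val + 1) ∈ D ↔ (i : ℤ) ∈ ribbonDes (ν j) := by
    intro j i
    simp [hdes j]
  rw [hcolumns, desCells_natInd_eq_iff hμ hD, forall_mem_cells_iff hμ hk]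
  refine forall_congr' fun j => ?_
  rw [(hrib j).isSemistandardOn_iff (t := fun c => σ (c.toNat, j.val + 1))]
  constructor
  · intro h i h1 h2 h3
    have hsub : ((i : ℤ) - 1).toNat = i - 1 := by omega
    simpa [hmemD, hsub] using h i (by omega) (by omega)
  · intro h c hc2 hcm
    obtain ⟨i, rfl⟩ := Int.eq_ofNat_of_zero_le (by omega : 0 ≤ c)
    have hsub : ((i : ℤ) - 1).toNat = i - 1 := by omega
    simpa [hmemD, hsub] using h i (by omega) (by omega) (by omega)

end RibbonTuple

lemma natFill_comp_symm_apply {α : Type} {μ : List ℕ} {N : ℕ} (e : α ≃ {u // u ∈ cells μ})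
    (g : α → Fin N) (a : α) : natFill μ (g ∘ e.symm) (e a) = (g a).val + 1 := by
  simp [natFill, extendF]

theorem Fmu_eq_llt_general (μ : List ℕ) (hμ : IsPartitionList μ)
    (D : Finset (ℕ × ℕ)) (hD : ∀ u ∈ D, u ∈ cells μ ∧ 2 ≤ u.1)
    (k : ℕ) (hk : k = μ.getD 0 0)
    (ν : Fin k → List ℕ × List ℕ)
    (hrib : ∀ j : Fin k, IsRibbonWithContents (ν j) (conj μ (j.val + 1)))
    (hdes : ∀ j : Fin k, ribbonDes (ν j) =
      (D.filter fun u => u.2 = j.val + 1).image (fun u => (u.1 : ℤ)))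
    (N : ℕ) :
    Fmu μ D N = llt ν N := by
  set e := diagCellEquiv hμ hk hrib
  have hfill (g : TDom ν → Fin N) :
      (fun a => (g a).val + 1) = fun a => natFill μ (g ∘ e.symm) (diagCell ν a) :=
    funext fun a => (natFill_comp_symm_apply e g a).symm
  symm
  refine Finset.sum_equiv (e.arrowCongr (Equiv.refl (Fin N))) (fun g => ?_) (fun g _ => ?_)
  · simp only [Finset.mem_filter, Finset.mem_univ, true_and, hfill g,
      isSSYTtuple_comp_diagCell_iff hμ hD hk hrib hdes]
    rfl
  · rw [hfill g, lltInv_comp_diagCell hμ hk hrib,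
      Fintype.prod_equiv e _ (fun u => X ((g ∘ e.symm) u)) (fun a => by simp)]
    rfl

/-- Let `μ` be a partition, `D ⊆ {(i,j) ∈ dg(μ) : i > 1}`, and
let `ν(μ,D) = (ν^(1),…,ν^(k))` with `k = μ_1` be the tuple of ribbons in which
`ν^(j)` has cell contents `{1,…,μ'_j}` and descent set `{i : (i,j) ∈ D}`.
Then for every `N ≥ 1`, `F_{μ,D}(x_1,…,x_N;q) = G_{ν(μ,D)}(x_1,…,x_N;q)`. -/
theorem Fmu_eq_llt (μ : List ℕ) (hμ : IsPartitionList μ)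
    (D : Finset (ℕ × ℕ)) (hD : ∀ u ∈ D, u ∈ cells μ ∧ 2 ≤ u.1)
    (k : ℕ) (hk : k = μ.getD 0 0)
    (ν : Fin k → List ℕ × List ℕ)
    (hrib : ∀ j : Fin k, IsRibbonWithContents (ν j) (conj μ (j.val + 1)))
    (hdes : ∀ j : Fin k, ribbonDes (ν j) =
      (D.filter fun u => u.2 = j.val + 1).image (fun u => (u.1 : ℤ)))
    (N : ℕ) (hN : 1 ≤ N) :
    Fmu μ D N = llt ν N :=
  Fmu_eq_llt_general μ hμ D hD k hk ν hrib hdes N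

end HHL
end

section
/- Let μ be a partition of n. For every N ≥ 1, C_μ(x_1,…,x_N;q,t) = Σ_ξ q^{inv(ξ)} t^{maj(ξ)} Q_{n,D(ξ)}(x_1,…,x_N), where the sum is over all standard fillings ξ (bijections ξ : dg(μ) → {1,…,n}), and D(ξ) = {i ∈ {1,…,n−1} : ξ^{-1}(i+1) precedes ξ^{-1}(i) in the reading order}. -/
open Finset MvPolynomial

namespace HHL

/-- Gessel's quasisymmetric function `Q_{n,D}(x_1,…,x_N)`: the sum of
`x_{a_1} ⋯ x_{a_n}` over weakly increasing sequences `1 ≤ a_1 ≤ ⋯ ≤ a_n ≤ N`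
with `a_i = a_{i+1} ⟹ i ∉ D` (entries encoded by `Fin N`, value `k` meaning
`k + 1`). -/
noncomputable def gesselQ (R : Type) [CommRing R] (n N : ℕ) (D : Finset ℕ) :
    MvPolynomial (Fin N) R :=
  ∑ a ∈ Finset.univ.filter (fun a : Fin n → Fin N =>
      (∀ i j : Fin n, i ≤ j → a i ≤ a j) ∧
      ∀ i : Fin n, ∀ h : i.val + 1 < n, a i = a ⟨i.val + 1, h⟩ → (i.val + 1) ∉ D),
    ∏ i, X (a i)

/-- The descent set `D(ξ) ⊆ {1,…,n−1}` of a standard filling `ξ` of `dg(μ)`: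
those `i` such that `ξ⁻¹(i+1)` precedes `ξ⁻¹(i)` in the reading order. -/
def stdDes (μ : List ℕ) (σ : ℕ × ℕ → ℕ) : Finset ℕ :=
  (Finset.Icc 1 (μ.sum - 1)).filter fun i =>
    ∃ u ∈ cells μ, ∃ v ∈ cells μ, σ u = i + 1 ∧ σ v = i ∧ ReadBefore u v


/-! Standardization: number the cells of a filling `g` by increasing entry, breaking ties by
reading order. The resulting standard filling `ξ` has the same `inv` and `maj` as `g`, because
both statistics only compare `σ u` with `σ v` for `u` read before `v`, and such a tie is an
inversion of neither filling. Writing `g = a ∘ ξ`, the word `a` is weakly increasing with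
`a_i < a_{i+1}` for `i ∈ D(ξ)`; conversely every such pair `(ξ, a)` comes from exactly one
filling, so the fibre of `ξ` contributes `Q_{n,D(ξ)}`. -/

section ReadingOrder

def readKey (u : ℕ × ℕ) : ℕᵒᵈ ×ₗ ℕ := toLex (OrderDual.toDual u.1, u.2)

lemma readBefore_iff_readKey_lt {u v : ℕ × ℕ} : ReadBefore u v ↔ readKey u < readKey v := by
  simp only [ReadBefore, readKey, Prod.Lex.toLex_lt_toLex, OrderDual.toDual_lt_toDual,
    OrderDual.toDual_inj]

lemma readKey_injective : Function.Injective readKey := by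
  intro u v h
  simpa [readKey, Prod.ext_iff] using h

lemma ReadBefore.asymm {u v : ℕ × ℕ} (h : ReadBefore u v) : ¬ ReadBefore v u := by
  unfold ReadBefore at *; omega

lemma AttackOrd.readBefore {u v : ℕ × ℕ} (h : AttackOrd u v) : ReadBefore u v := by
  unfold AttackOrd at h; unfold ReadBefore; omega

end ReadingOrder

lemma one_le_of_mem_cells {μ : List ℕ} {u : ℕ × ℕ} (hu : u ∈ cells μ) : 1 ≤ u.1 := by
  simp only [cells, Finset.mem_filter, Finset.mem_product, Finset.mem_Icc] at hu
  exact hu.1.1.1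

lemma card_cells (μ : List ℕ) : (cells μ).card = μ.sum := by
  rw [cells, Finset.card_filter, Finset.sum_product]
  have hrow : ∀ i ∈ Finset.Icc 1 μ.length,
      ∑ j ∈ Finset.Icc 1 (μ.foldr max 0), (if j ≤ μ.getD (i - 1) 0 then 1 else 0)
        = μ.getD (i - 1) 0 := by
    intro i hi
    rw [Finset.mem_Icc] at hi
    have hle : μ.getD (i - 1) 0 ≤ μ.foldr max 0 := by
      rw [List.getD_eq_getElem _ _ (by omega)]
      exact Multiset.le_sup (s := (μ : Multiset ℕ)) (List.getElem_mem _)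
    have hfilter : (Finset.Icc 1 (μ.foldr max 0)).filter (· ≤ μ.getD (i - 1) 0)
        = Finset.Icc 1 (μ.getD (i - 1) 0) := by
      ext j; simp only [Finset.mem_filter, Finset.mem_Icc]; omega
    rw [← Finset.card_filter, hfilter, Nat.card_Icc, Nat.add_sub_cancel]
  rw [Finset.sum_congr rfl hrow, ← Fin.sum_univ_getElem, ← Finset.Ico_add_one_right_eq_Icc,
    Finset.sum_Ico_eq_sum_range, Finset.sum_range]
  simp

section SameReadingComparisons

variable {V W : Type}

def SameReadingComparisons (μ : List ℕ) (I : V → V → Prop) (σ : ℕ × ℕ → V)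
    (J : W → W → Prop) (τ : ℕ × ℕ → W) : Prop :=
  ∀ u ∈ cells μ, ∀ v ∈ cells μ, ReadBefore u v → (I (σ u) (σ v) ↔ J (τ u) (τ v))

variable {μ : List ℕ} {I : V → V → Prop} {J : W → W → Prop} [DecidableRel I] [DecidableRel J]
  {σ : ℕ × ℕ → V} {τ : ℕ × ℕ → W}

lemma desCells_congr (h : SameReadingComparisons μ I σ J τ) :
    desCells μ I σ = desCells μ J τ := by
  refine Finset.filter_congr fun u hu => and_congr_right fun hv => h _ hu _ hv ?_
  have := one_le_of_mem_cells hv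
  unfold ReadBefore
  omega

lemma invPairs_congr (h : SameReadingComparisons μ I σ J τ) :
    invPairs μ I σ = invPairs μ J τ := by
  refine Finset.filter_congr fun p hp => and_congr_right fun hp' => ?_
  rw [Finset.mem_product] at hp
  exact h _ hp.1 _ hp.2 hp'.readBefore

lemma invStat_congr (h : SameReadingComparisons μ I σ J τ) :
    invStat μ I σ = invStat μ J τ := by
  rw [invStat, invStat, invPairs_congr h, desCells_congr h]

lemma majStat_congr (h : SameReadingComparisons μ I σ J τ) :
    majStat μ I σ = majStat μ J τ := by
  rw [majStat, majStat, desCells_congr h]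

end SameReadingComparisons

section Rank

variable {α β : Type*} [Fintype α] [LinearOrder β] {k : α → β} (hk : Function.Injective k)
  {n : ℕ} (h : Fintype.card α = n)

def rankEquiv : α ≃ Fin n :=
  letI := LinearOrder.lift' k hk
  (Fintype.orderIsoFinOfCardEq α h).symm.toEquiv

lemma rankEquiv_lt_iff {u v : α} : rankEquiv hk h u < rankEquiv hk h v ↔ k u < k v :=
  letI := LinearOrder.lift' k hk
  (Fintype.orderIsoFinOfCardEq α h).symm.lt_iff_lt

lemma eq_rankEquiv {e : α ≃ Fin n} (he : ∀ u v, e u < e v → k u < k v) :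
    e = rankEquiv hk h := by
  let _ := LinearOrder.lift' k hk
  have hmono : StrictMono e.symm := fun i j hij =>
    he (e.symm i) (e.symm j) (by simpa using hij)
  have hiso := Subsingleton.elim (hmono.orderIsoOfSurjective e.symm e.symm.surjective)
    (Fintype.orderIsoFinOfCardEq α h)
  refine Equiv.ext fun u => ?_
  change e u = (Fintype.orderIsoFinOfCardEq α h).symm u
  rw [← hiso]
  nth_rewrite 2 [← e.symm_apply_apply u]
  exact (StrictMono.orderIsoOfSurjective_symm_apply_self _ _ _ _).symm

end Rank

section Standardization

variable {μ : List ℕ} {n N : ℕ}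

lemma natFill_apply (f : {u // u ∈ cells μ} → Fin N) (u : {u // u ∈ cells μ}) :
    natFill μ f u = f u + 1 := by
  rw [natFill, extendF, dif_pos u.2]

lemma succ_mem_stdDes_iff (hn : μ.sum = n) (e : {u // u ∈ cells μ} ≃ Fin n) (i : Fin n)
    (hi : i.val + 1 < n) :
    i.val + 1 ∈ stdDes μ (natFill μ e) ↔ ReadBefore (e.symm ⟨i.val + 1, hi⟩).1 (e.symm i).1 := by
  simp only [stdDes, Finset.mem_filter, Finset.mem_Icc]
  constructor
  · rintro ⟨-, u, hu, v, hv, hue, hve, huv⟩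
    rw [natFill_apply e ⟨u, hu⟩, add_left_inj] at hue
    rw [natFill_apply e ⟨v, hv⟩, add_left_inj] at hve
    have hu' : ⟨u, hu⟩ = e.symm ⟨i.val + 1, hi⟩ := e.eq_symm_apply.mpr (Fin.ext hue)
    have hv' : ⟨v, hv⟩ = e.symm i := e.eq_symm_apply.mpr (Fin.ext hve)
    rwa [← hu', ← hv']
  · intro h
    refine ⟨by omega, _, (e.symm ⟨i.val + 1, hi⟩).2, _, (e.symm i).2, ?_, ?_, h⟩ <;>
      simp [natFill_apply]

variable {β : Type*}

def stdKey (g : {u // u ∈ cells μ} → β) (u : {u // u ∈ cells μ}) : β ×ₗ (ℕᵒᵈ ×ₗ ℕ) :=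
  toLex (g u, readKey u.1)

lemma stdKey_injective (g : {u // u ∈ cells μ} → β) : Function.Injective (stdKey g) := by
  intro u v h
  exact Subtype.ext (readKey_injective (congrArg (fun p => (ofLex p).2) h))

variable [LinearOrder β]

lemma stdKey_lt_stdKey_iff {g : {u // u ∈ cells μ} → β} {u v : {u // u ∈ cells μ}} :
    stdKey g u < stdKey g v ↔ g u < g v ∨ g u = g v ∧ ReadBefore u.1 v.1 := by
  rw [stdKey, stdKey, Prod.Lex.toLex_lt_toLex, readBefore_iff_readKey_lt]

def std (hn : μ.sum = n) (g : {u // u ∈ cells μ} → β) : {u // u ∈ cells μ} ≃ Fin n :=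
  rankEquiv (stdKey_injective g) (by rw [Fintype.card_coe, card_cells, hn])

lemma std_lt_std_iff (hn : μ.sum = n) {g : {u // u ∈ cells μ} → β} {u v : {u // u ∈ cells μ}} :
    std hn g u < std hn g v ↔ g u < g v ∨ g u = g v ∧ ReadBefore u.1 v.1 :=
  (rankEquiv_lt_iff _ _).trans stdKey_lt_stdKey_iff

lemma sameReadingComparisons_std (hn : μ.sum = n) (g : {u // u ∈ cells μ} → Fin N) :
    SameReadingComparisons μ natInd (natFill μ g) natInd (natFill μ (std hn g)) := by
  intro u hu v hv huv
  simp only [natInd, natFill_apply _ ⟨u, hu⟩, natFill_apply _ ⟨v, hv⟩, add_lt_add_iff_right,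
    Fin.val_fin_lt, std_lt_std_iff]
  exact (or_iff_left_of_imp fun h => absurd h.2 huv.asymm).symm

end Standardization

lemma strictMonoOn_fiber_of_lt_succ {α β : Type*} [PartialOrder α] [Preorder β] {n : ℕ}
    {a : Fin n → α} (ha : Monotone a) {f : Fin n → β}
    (hf : ∀ (i : Fin n) (hi : i.val + 1 < n), a i = a ⟨i.val + 1, hi⟩ → f i < f ⟨i.val + 1, hi⟩)
    (x : α) : StrictMonoOn f (a ⁻¹' {x}) := by
  rintro i (hi : a i = x) ⟨j, hj⟩ (hj' : a _ = x) hij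
  induction j with
  | zero => exact absurd hij (Nat.not_lt_zero _)
  | succ j ih =>
    have hij' : i ≤ ⟨j, by omega⟩ := Nat.le_of_lt_succ hij
    have hprev : a ⟨j, _⟩ = a ⟨j + 1, hj⟩ :=
      le_antisymm (ha (Nat.le_succ j)) (hj'.trans hi.symm ▸ ha hij')
    rcases hij'.lt_or_eq with hlt | heq
    · exact (ih _ (hprev.trans hj') hlt).trans (hf _ hj hprev)
    · exact heq ▸ hf _ hj hprev

section Compatible

variable {n N : ℕ}

def IsCompatible (D : Finset ℕ) (a : Fin n → Fin N) : Prop :=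
  (∀ i j : Fin n, i ≤ j → a i ≤ a j) ∧
    ∀ (i : Fin n) (hi : i.val + 1 < n), a i = a ⟨i.val + 1, hi⟩ → i.val + 1 ∉ D

instance (D : Finset ℕ) : DecidablePred (IsCompatible (n := n) (N := N) D) := fun _ => by
  unfold IsCompatible; infer_instance

lemma gesselQ_eq_sum_isCompatible (R : Type) [CommRing R] (D : Finset ℕ) :
    gesselQ R n N D = ∑ a ∈ Finset.univ.filter (IsCompatible (n := n) D), ∏ i, X (a i) :=
  rfl

variable {μ : List ℕ} (hn : μ.sum = n)
include hn

lemma isCompatible_comp_std_symm (g : {u // u ∈ cells μ} → Fin N) :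
    IsCompatible (stdDes μ (natFill μ (std hn g))) (g ∘ (std hn g).symm) := by
  set e := std hn g
  have hstd : ∀ {i j : Fin n}, i < j →
      g (e.symm i) < g (e.symm j) ∨
        g (e.symm i) = g (e.symm j) ∧ ReadBefore (e.symm i).1 (e.symm j).1 := fun {i j} hij =>
    (std_lt_std_iff hn).mp (by simpa only [e, Equiv.apply_symm_apply] using hij)
  refine ⟨fun i j hij => ?_, fun i hi hai hmem => ?_⟩
  · rcases hij.lt_or_eq with hlt | rfl
    · rcases hstd hlt with h | h
      exacts [h.le, h.1.le]
    · exact le_rfl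
  · rw [succ_mem_stdDes_iff hn e i hi] at hmem
    rcases hstd (Fin.lt_def.mpr (Nat.lt_succ_self i) : i < ⟨i.val + 1, hi⟩) with h | h
    · exact h.ne hai
    · exact h.2.asymm hmem

lemma std_comp_eq_of_isCompatible {ξ : {u // u ∈ cells μ} → Fin n} (hξ : Function.Bijective ξ)
    {a : Fin n → Fin N} (ha : IsCompatible (stdDes μ (natFill μ ξ)) a) :
    ⇑(std hn (a ∘ ξ)) = ξ := by
  set e := Equiv.ofBijective ξ hξ
  suffices std hn (a ∘ e) = e from congrArg DFunLike.coe this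
  have hstep : ∀ (i : Fin n) (hi : i.val + 1 < n), a i = a ⟨i.val + 1, hi⟩ →
      readKey (e.symm i).1 < readKey (e.symm ⟨i.val + 1, hi⟩).1 := by
    intro i hi hai
    have hnot := ha.2 i hi hai
    change i.val + 1 ∉ stdDes μ (natFill μ e) at hnot
    rw [succ_mem_stdDes_iff hn e i hi, readBefore_iff_readKey_lt, not_lt] at hnot
    refine hnot.lt_of_ne fun h => ?_
    have := e.symm.injective (Subtype.ext (readKey_injective h))
    simp [Fin.ext_iff] at this
  refine (eq_rankEquiv _ _ fun u v huv => ?_).symm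
  rw [stdKey_lt_stdKey_iff]
  rcases (ha.1 _ _ huv.le).lt_or_eq with hlt | heq
  · exact Or.inl hlt
  · refine Or.inr ⟨heq, ?_⟩
    have := strictMonoOn_fiber_of_lt_succ (fun i j h => ha.1 i j h) hstep (a (e v)) heq rfl huv
    simpa [readBefore_iff_readKey_lt] using this

end Compatible

theorem Cmu_eq_sum_standard_gesselQ_general (n : ℕ) (μ : List ℕ)
    (hn : μ.sum = n) (N : ℕ) :
    Cmu μ N
      = ∑ f ∈ Finset.univ.filter
            (fun f : {u // u ∈ cells μ} → Fin n => Function.Bijective f),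
          C ((X 0 : MvPolynomial (Fin 2) ℤ) ^ invStat μ natInd (natFill μ f) *
             (X 1 : MvPolynomial (Fin 2) ℤ) ^ majStat μ natInd (natFill μ f)) *
            gesselQ (MvPolynomial (Fin 2) ℤ) n N (stdDes μ (natFill μ f)) := by
  simp only [Cmu, gesselQ_eq_sum_isCompatible, Finset.mul_sum]
  rw [Finset.sum_sigma']
  refine Finset.sum_nbij' (fun g => ⟨std hn g, g ∘ (std hn g).symm⟩) (fun p => p.2 ∘ p.1)
    (fun g _ => ?_) (fun _ _ => Finset.mem_univ _) (fun g _ => ?_) (fun p hp => ?_) (fun g _ => ?_)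
  · simp only [Finset.mem_sigma, Finset.mem_filter, Finset.mem_univ, true_and]
    exact ⟨(std hn g).bijective, isCompatible_comp_std_symm hn g⟩
  · ext u
    simp
  · obtain ⟨ξ, a⟩ := p
    simp only [Finset.mem_sigma, Finset.mem_filter, Finset.mem_univ, true_and] at hp
    have hstd := std_comp_eq_of_isCompatible hn hp.1 hp.2
    refine Sigma.ext hstd (heq_of_eq (funext fun k => congrArg a ?_))
    exact (congrFun hstd _).symm.trans ((std hn (a ∘ ξ)).apply_symm_apply k)
  · rw [invStat_congr (sameReadingComparisons_std hn g),
      majStat_congr (sameReadingComparisons_std hn g), ← (std hn g).symm.prod_comp]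
    rfl

/-- For a partition `μ` of `n` and every `N ≥ 1`,
`C_μ(x_1,…,x_N;q,t) = Σ_ξ q^{inv(ξ)} t^{maj(ξ)} Q_{n,D(ξ)}(x_1,…,x_N)`, the sum
being over all standard fillings `ξ : dg(μ) ≅ {1,…,n}`. -/
theorem Cmu_eq_sum_standard_gesselQ (n : ℕ) (μ : List ℕ) (hμ : IsPartitionList μ)
    (hn : μ.sum = n) (N : ℕ) (hN : 1 ≤ N) :
    Cmu μ N
      = ∑ f ∈ Finset.univ.filter
            (fun f : {u // u ∈ cells μ} → Fin n => Function.Bijective f),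
          C ((X 0 : MvPolynomial (Fin 2) ℤ) ^ invStat μ natInd (natFill μ f) *
             (X 1 : MvPolynomial (Fin 2) ℤ) ^ majStat μ natInd (natFill μ f)) *
            gesselQ (MvPolynomial (Fin 2) ℤ) n N (stdDes μ (natFill μ f)) :=
  Cmu_eq_sum_standard_gesselQ_general n μ hn N

end HHL
end

section
/- Let μ be a partition and N ≥ 1, and use the total order <₁ on the super alphabet A. Then Σ_σ (−1)^{m(σ)} q^{p(σ)+inv(σ)} t^{maj(σ)} x^{|σ|}, summed over ALL super fillings σ : dg(μ) → A with |σ(u)| ≤ N for all u, equals the same sum restricted to non-attacking super fillings, i.e. those σ with |σ(u)| ≠ |σ(v)| for every pair of attacking cells u, v. -/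
open Finset MvPolynomial

namespace HHL

/-!
Call a cell *repeated* if it attacks a cell later in reading order whose entry has the same
absolute value, and let `c` be the last repeated cell. Toggling the bar of `σ(c)` is an
involution on attacking fillings: absolute values do not change, so neither does `c`. The
cell `v` attacked by `c` with `|σ(v)| = |σ(c)|` is unique, and the cell below `c` carries a
different absolute value (otherwise `v` would be a later repeated cell). Hence the descent set
is unchanged, and among the inversions only the pair `(c, v)` changes, in the opposite
direction to `p(σ)`. So `q^{p + inv} t^{maj}` is preserved while `(-1)^m` changes sign.
Since `Σ_{u ∈ Des(σ)} arm(u) ≤ |Inv(σ)|`, the truncated subtraction in `inv` does no harm.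
-/

def barFlip (x : SLetter) : SLetter := (x.1, !x.2)

lemma indOf_lt1_iff_of_fst_ne {x y : SLetter} (h : x.1 ≠ y.1) : IndOf lt1 x y ↔ y.1 < x.1 := by
  obtain ⟨a, b⟩ := x; obtain ⟨c, d⟩ := y
  simp only [IndOf, lt1, Prod.mk.injEq] at *
  omega

lemma indOf_lt1_iff_of_fst_eq {x y : SLetter} (h : x.1 = y.1) : IndOf lt1 x y ↔ x.2 = true := by
  obtain ⟨a, b⟩ := x; obtain ⟨c, d⟩ := y
  simp only at h; subst h
  cases b <;> cases d <;> simp [IndOf, lt1]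

lemma indOf_lt1_barFlip_left {x y : SLetter} (h : x.1 ≠ y.1) :
    IndOf lt1 (barFlip x) y ↔ IndOf lt1 x y := by
  rw [indOf_lt1_iff_of_fst_ne h, indOf_lt1_iff_of_fst_ne (x := barFlip x) h, barFlip]

lemma indOf_lt1_barFlip_right (x y : SLetter) : IndOf lt1 x (barFlip y) ↔ IndOf lt1 x y := by
  by_cases h : x.1 = y.1
  · rw [indOf_lt1_iff_of_fst_eq h, indOf_lt1_iff_of_fst_eq (y := barFlip y) h]
  · rw [indOf_lt1_iff_of_fst_ne h, indOf_lt1_iff_of_fst_ne (y := barFlip y) h, barFlip]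

lemma indOf_lt1_split (x y z : SLetter) (h : IndOf lt1 x y) :
    IndOf lt1 x z ∨ IndOf lt1 z y := by
  obtain ⟨a, b⟩ := x; obtain ⟨c, d⟩ := y; obtain ⟨e, f⟩ := z
  simp only [IndOf, lt1, Prod.mk.injEq] at *
  cases b <;> cases d <;> cases f <;> simp_all <;> omega

lemma one_le_fst_of_mem_cells {μ : List ℕ} {u : ℕ × ℕ} (h : u ∈ cells μ) : 1 ≤ u.1 :=
  (Finset.mem_Icc.mp (Finset.mem_product.mp (Finset.mem_filter.mp h).1).1).1

def readPos (u : ℕ × ℕ) : ℕᵒᵈ ×ₗ ℕ := toLex (OrderDual.toDual u.1, u.2)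

lemma readBefore_iff_readPos_lt {u v : ℕ × ℕ} : ReadBefore u v ↔ readPos u < readPos v := by
  simp [ReadBefore, readPos, Prod.Lex.toLex_lt_toLex]

namespace AttackOrd

variable {u v w : ℕ × ℕ}

lemma readBefore_s5 (h : AttackOrd u v) : ReadBefore u v := by
  unfold AttackOrd ReadBefore at *; omega

lemma ne (h : AttackOrd u v) : u ≠ v := by
  rintro rfl; unfold AttackOrd at h; omega

lemma attackOrd_or_attackOrd (hv : AttackOrd u v) (hw : AttackOrd u w) (hvw : v ≠ w) :
    AttackOrd v w ∨ AttackOrd w v := by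
  have : v.1 ≠ w.1 ∨ v.2 ≠ w.2 := by
    by_contra! hc; exact hvw (Prod.ext hc.1 hc.2)
  unfold AttackOrd at *; omega

lemma attackOrd_below (h : AttackOrd u v) (hu : 1 ≤ u.1) : AttackOrd v (u.1 - 1, u.2) := by
  unfold AttackOrd at *; omega

end AttackOrd

section RepeatCell

variable {α : Type*} (μ : List ℕ) (g : ℕ × ℕ → α)

def IsRepeatCell (u : ℕ × ℕ) : Prop := u ∈ cells μ ∧ ∃ v ∈ cells μ, AttackOrd u v ∧ g v = g u

def IsLastRepeatCell (c : ℕ × ℕ) : Prop :=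
  IsRepeatCell μ g c ∧ ∀ u, IsRepeatCell μ g u → ¬ ReadBefore c u

noncomputable def lastRepeatCell : ℕ × ℕ := Classical.epsilon (IsLastRepeatCell μ g)

variable {μ g}

lemma isLastRepeatCell_lastRepeatCell (h : ∃ u, IsRepeatCell μ g u) :
    IsLastRepeatCell μ g (lastRepeatCell μ g) := by
  classical
  obtain ⟨u, hu⟩ := h
  obtain ⟨c, hc, hmax⟩ := ((cells μ).filter (IsRepeatCell μ g)).exists_max_image readPos
    ⟨u, Finset.mem_filter.mpr ⟨hu.1, hu⟩⟩
  refine Classical.epsilon_spec ⟨c, (Finset.mem_filter.mp hc).2, fun w hw hcw => ?_⟩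
  exact (readBefore_iff_readPos_lt.mp hcw).not_ge (hmax w (Finset.mem_filter.mpr ⟨hw.1, hw⟩))

namespace IsLastRepeatCell

variable {c u v w : ℕ × ℕ}

lemma not_isRepeatCell (h : IsLastRepeatCell μ g c) (hcu : AttackOrd c u) :
    ¬ IsRepeatCell μ g u :=
  fun hu => h.2 u hu hcu.readBefore_s5

lemma eq_of_attackOrd (h : IsLastRepeatCell μ g c) (hv : v ∈ cells μ) (hcv : AttackOrd c v)
    (hgv : g v = g c) (hw : w ∈ cells μ) (hcw : AttackOrd c w) (hgw : g w = g c) : w = v := by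
  by_contra hwv
  rcases hcw.attackOrd_or_attackOrd hcv hwv with hwv' | hvw
  · exact h.not_isRepeatCell hcw ⟨hw, v, hv, hwv', hgv.trans hgw.symm⟩
  · exact h.not_isRepeatCell hcv ⟨hv, w, hw, hvw, hgw.trans hgv.symm⟩

lemma apply_below_ne (h : IsLastRepeatCell μ g c) (hb : (c.1 - 1, c.2) ∈ cells μ) :
    g (c.1 - 1, c.2) ≠ g c := by
  obtain ⟨hc, v, hv, hcv, hgv⟩ := h.1
  intro hgb
  exact h.not_isRepeatCell hcv
    ⟨hv, _, hb, hcv.attackOrd_below (one_le_fst_of_mem_cells hc), hgb.trans hgv.symm⟩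

end IsLastRepeatCell

end RepeatCell

lemma card_filter_add_ite_eq {α : Type*} [DecidableEq α] {s : Finset α} {p q : α → Prop}
    [DecidablePred p] [DecidablePred q] {a : α} (ha : a ∈ s)
    (h : ∀ x ∈ s, x ≠ a → (p x ↔ q x)) :
    (s.filter p).card + (if q a then 1 else 0) = (s.filter q).card + (if p a then 1 else 0) := by
  rw [Finset.card_filter, Finset.card_filter, ← Finset.add_sum_erase s _ ha,
    ← Finset.add_sum_erase s _ ha, Finset.sum_congr rfl fun x hx => if_congr
      (h x (Finset.mem_of_mem_erase hx) (Finset.ne_of_mem_erase hx)) rfl rfl]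
  omega

/-- A descent `u` and a cell `w` to its right give the inversion `(u, w)` or `(w, u↓)`,
where `u↓` is the cell below `u`; the two cases are told apart by whether the cells share a row. -/
lemma sum_arm_desCells_le_card_invPairs {V : Type} (μ : List ℕ) {Ind : V → V → Prop}
    [DecidableRel Ind] (hInd : ∀ x y z, Ind x y → Ind x z ∨ Ind z y) (σ : ℕ × ℕ → V) :
    ∑ u ∈ desCells μ Ind σ, arm μ u ≤ (invPairs μ Ind σ).card := by
  unfold arm
  rw [← Finset.card_sigma]
  set below : ℕ × ℕ → ℕ × ℕ := fun u => (u.1 - 1, u.2)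
  refine Finset.card_le_card_of_injOn
    (fun p => if Ind (σ p.1) (σ p.2) then (p.1, p.2) else (p.2, below p.1)) ?_
    (Set.LeftInvOn.injOn (f₁' := fun x => if x.1.1 = x.2.1 then ⟨x.1, x.2⟩ else
      ⟨(x.2.1 + 1, x.2.2), x.1⟩) ?_)
  · rintro ⟨u, w⟩ hp
    simp only [Finset.coe_sigma, Set.mem_sigma_iff, Finset.mem_coe, desCells,
      Finset.mem_filter] at hp
    obtain ⟨⟨hu, hb, hdes⟩, hw, hrow, hcol⟩ := hp
    have hb1 := one_le_fst_of_mem_cells hb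
    simp only [Finset.mem_coe, invPairs, Finset.mem_filter, Finset.mem_product]
    split_ifs with hI
    · exact ⟨⟨hu, hw⟩, Or.inl ⟨hrow.symm, hcol⟩, hI⟩
    · exact ⟨⟨hw, hb⟩, Or.inr ⟨by simp only [below]; omega, hcol⟩,
        (hInd _ _ (σ w) hdes).resolve_left hI⟩
  · rintro ⟨u, w⟩ hp
    simp only [Finset.coe_sigma, Set.mem_sigma_iff, Finset.mem_coe, desCells,
      Finset.mem_filter] at hp
    obtain ⟨⟨-, hb, -⟩, -, hrow, -⟩ := hp
    have hb1 := one_le_fst_of_mem_cells hb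
    dsimp only
    split_ifs with hI h h
    · rfl
    · exact absurd hrow.symm h
    · simp only [below] at h; omega
    · have hu1 : u.1 - 1 + 1 = u.1 := by simp only at hb1; omega
      simp only [below, hu1]

section FlipAt

variable {μ : List ℕ} {σ : ℕ × ℕ → SLetter} {c : ℕ × ℕ}

def flipAt (σ : ℕ × ℕ → SLetter) (c : ℕ × ℕ) : ℕ × ℕ → SLetter :=
  Function.update σ c (barFlip (σ c))

lemma indOf_lt1_flipAt_iff {a b : ℕ × ℕ} (h : a = c → (σ b).1 ≠ (σ c).1) :
    IndOf lt1 (flipAt σ c a) (flipAt σ c b) ↔ IndOf lt1 (σ a) (σ b) := by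
  by_cases ha : a = c
  · subst ha
    have hb : b ≠ a := by rintro rfl; exact h rfl rfl
    rw [flipAt, Function.update_self, Function.update_of_ne hb]
    exact indOf_lt1_barFlip_left (Ne.symm (h rfl))
  · rw [flipAt, Function.update_of_ne ha]
    by_cases hb : b = c
    · subst hb
      rw [Function.update_self]
      exact indOf_lt1_barFlip_right _ _
    · rw [Function.update_of_ne hb]

lemma desCells_flipAt (h : IsLastRepeatCell μ (fun x => (σ x).1) c) :
    desCells μ (IndOf lt1) (flipAt σ c) = desCells μ (IndOf lt1) σ := by
  refine Finset.filter_congr fun u _ => and_congr_right fun hb =>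
    indOf_lt1_flipAt_iff fun huc => ?_
  subst huc
  exact h.apply_below_ne hb

lemma majStat_flipAt (h : IsLastRepeatCell μ (fun x => (σ x).1) c) :
    majStat μ (IndOf lt1) (flipAt σ c) = majStat μ (IndOf lt1) σ := by
  rw [majStat, desCells_flipAt h, majStat]

lemma negCount_flipAt (hc : c ∈ cells μ) :
    negCount μ (flipAt σ c) + (if (σ c).2 = true then 1 else 0)
      = negCount μ σ + (if (σ c).2 = false then 1 else 0) := by
  have := card_filter_add_ite_eq (p := fun u => (flipAt σ c u).2 = true)
    (q := fun u => (σ u).2 = true) hc fun x _ hx => by rw [flipAt, Function.update_of_ne hx]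
  simpa [negCount, flipAt, barFlip] using this

lemma posCount_flipAt (hc : c ∈ cells μ) :
    posCount μ (flipAt σ c) + (if (σ c).2 = false then 1 else 0)
      = posCount μ σ + (if (σ c).2 = true then 1 else 0) := by
  have := card_filter_add_ite_eq (p := fun u => (flipAt σ c u).2 = false)
    (q := fun u => (σ u).2 = false) hc fun x _ hx => by rw [flipAt, Function.update_of_ne hx]
  simpa [posCount, flipAt, barFlip] using this

lemma card_invPairs_flipAt (h : IsLastRepeatCell μ (fun x => (σ x).1) c) :
    (invPairs μ (IndOf lt1) (flipAt σ c)).card + (if (σ c).2 = true then 1 else 0)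
      = (invPairs μ (IndOf lt1) σ).card + (if (σ c).2 = false then 1 else 0) := by
  obtain ⟨hc, v, hv, hcv, hvc⟩ := h.1
  have hpair : ∀ x ∈ cells μ ×ˢ cells μ, x ≠ (c, v) →
      ((AttackOrd x.1 x.2 ∧ IndOf lt1 (flipAt σ c x.1) (flipAt σ c x.2)) ↔
        (AttackOrd x.1 x.2 ∧ IndOf lt1 (σ x.1) (σ x.2))) := fun x hx hne =>
    and_congr_right fun hatt => indOf_lt1_flipAt_iff fun hxc hσx => hne <| Prod.ext hxc <|
      h.eq_of_attackOrd hv hcv hvc (Finset.mem_product.mp hx).2 (hxc ▸ hatt) hσx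
  have hold : (AttackOrd c v ∧ IndOf lt1 (σ c) (σ v)) ↔ (σ c).2 = true := by
    rw [indOf_lt1_iff_of_fst_eq hvc.symm, and_iff_right hcv]
  have hnew : (AttackOrd c v ∧ IndOf lt1 (flipAt σ c c) (flipAt σ c v)) ↔ (σ c).2 = false := by
    rw [flipAt, Function.update_self, Function.update_of_ne hcv.ne.symm,
      indOf_lt1_iff_of_fst_eq (x := barFlip (σ c)) hvc.symm, and_iff_right hcv]
    simp [barFlip]
  have := card_filter_add_ite_eq (Finset.mem_product.mpr ⟨hc, hv⟩) hpair
  rwa [if_congr hold rfl rfl, if_congr hnew rfl rfl] at this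

lemma posCount_add_invStat_flipAt (h : IsLastRepeatCell μ (fun x => (σ x).1) c) :
    posCount μ (flipAt σ c) + invStat μ (IndOf lt1) (flipAt σ c)
      = posCount μ σ + invStat μ (IndOf lt1) σ := by
  have harm := sum_arm_desCells_le_card_invPairs μ indOf_lt1_split σ
  have harm' := sum_arm_desCells_le_card_invPairs μ indOf_lt1_split (flipAt σ c)
  have hpos := posCount_flipAt (σ := σ) h.1.1
  have hinv := card_invPairs_flipAt h
  rw [desCells_flipAt h] at harm'
  unfold invStat
  rw [desCells_flipAt h]
  cases hb : (σ c).2 <;> simp [hb] at hpos hinv <;> omega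

lemma neg_one_pow_negCount_flipAt {R : Type*} [Ring R] (hc : c ∈ cells μ) :
    (-1 : R) ^ negCount μ (flipAt σ c) = -(-1) ^ negCount μ σ := by
  have hneg := negCount_flipAt (σ := σ) hc
  cases hb : (σ c).2 <;> simp [hb] at hneg
  · rw [hneg, pow_succ, mul_neg_one]
  · rw [← hneg, pow_succ, mul_neg_one, neg_neg]

end FlipAt

section SuperFill

variable {μ : List ℕ} {N : ℕ}

def flipFill (f : {u // u ∈ cells μ} → Fin N × Bool) (c : ℕ × ℕ) :
    {u // u ∈ cells μ} → Fin N × Bool :=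
  fun u => if (u : ℕ × ℕ) = c then ((f u).1, !(f u).2) else f u

lemma flipFill_fst (f : {u // u ∈ cells μ} → Fin N × Bool) (c : ℕ × ℕ)
    (u : {u // u ∈ cells μ}) : (flipFill f c u).1 = (f u).1 := by
  unfold flipFill; split_ifs <;> rfl

lemma flipFill_flipFill (f : {u // u ∈ cells μ} → Fin N × Bool) (c : ℕ × ℕ) :
    flipFill (flipFill f c) c = f := by
  funext u; unfold flipFill; split_ifs <;> simp

lemma flipFill_ne (f : {u // u ∈ cells μ} → Fin N × Bool) {c : ℕ × ℕ} (hc : c ∈ cells μ) :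
    flipFill f c ≠ f := fun h => by
  simpa [flipFill] using congrArg Prod.snd (congrFun h ⟨c, hc⟩)

lemma superFill_flipFill_fst (f : {u // u ∈ cells μ} → Fin N × Bool) (c x : ℕ × ℕ) :
    (superFill μ (flipFill f c) x).1 = (superFill μ f x).1 := by
  unfold superFill extendF; split_ifs <;> simp [flipFill_fst]

lemma superFill_flipFill (f : {u // u ∈ cells μ} → Fin N × Bool) {c : ℕ × ℕ}
    (hc : c ∈ cells μ) : superFill μ (flipFill f c) = flipAt (superFill μ f) c := by
  funext x
  by_cases hx : x = c
  · subst hx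
    simp [superFill, extendF, flipFill, flipAt, barFlip, hc]
  · rw [flipAt, Function.update_of_ne hx]
    unfold superFill extendF
    split_ifs with hxμ
    · simp [flipFill, hx]
    · rfl

noncomputable def superInvolution (f : {u // u ∈ cells μ} → Fin N × Bool) :
    {u // u ∈ cells μ} → Fin N × Bool :=
  flipFill f (lastRepeatCell μ fun x => (superFill μ f x).1)

lemma superInvolution_superInvolution (f : {u // u ∈ cells μ} → Fin N × Bool) :
    superInvolution (superInvolution f) = f := by
  have habs : (fun x => (superFill μ (superInvolution f) x).1) = fun x => (superFill μ f x).1 :=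
    funext fun x => superFill_flipFill_fst f _ x
  rw [superInvolution, habs]
  exact flipFill_flipFill f _

lemma nonAttacking_superInvolution_iff (f : {u // u ∈ cells μ} → Fin N × Bool) :
    NonAttacking μ (superFill μ (superInvolution f)) ↔ NonAttacking μ (superFill μ f) := by
  simp only [NonAttacking, sAbs, superInvolution, superFill_flipFill_fst]

lemma isLastRepeatCell_of_not_nonAttacking {σ : ℕ × ℕ → SLetter} (h : ¬ NonAttacking μ σ) :
    IsLastRepeatCell μ (fun x => (σ x).1) (lastRepeatCell μ fun x => (σ x).1) := by
  refine isLastRepeatCell_lastRepeatCell ?_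
  simp only [NonAttacking, not_forall, sAbs, ne_eq, not_not, Nat.add_right_cancel_iff] at h
  obtain ⟨u, hu, v, hv, huv | hvu, habs⟩ := h
  · exact ⟨u, hu, v, hv, huv, habs.symm⟩
  · exact ⟨v, hv, u, hu, hvu, habs⟩

noncomputable def superWeight (μ : List ℕ) (N : ℕ) (f : {u // u ∈ cells μ} → Fin N × Bool) :
    MvPolynomial (Fin N) (MvPolynomial (Fin 2) ℤ) :=
  (-1) ^ negCount μ (superFill μ f) *
    C ((X 0 : MvPolynomial (Fin 2) ℤ) ^
          (posCount μ (superFill μ f) + invStat μ (IndOf lt1) (superFill μ f)) *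
       (X 1 : MvPolynomial (Fin 2) ℤ) ^ majStat μ (IndOf lt1) (superFill μ f)) *
    ∏ u, X ((f u).1)

lemma superWeight_add_superWeight_superInvolution (f : {u // u ∈ cells μ} → Fin N × Bool)
    (hf : ¬ NonAttacking μ (superFill μ f)) :
    superWeight μ N f + superWeight μ N (superInvolution f) = 0 := by
  have h := isLastRepeatCell_of_not_nonAttacking hf
  rw [superWeight, superWeight, superInvolution, superFill_flipFill f h.1.1,
    neg_one_pow_negCount_flipAt h.1.1, posCount_add_invStat_flipAt h, majStat_flipAt h]
  simp only [flipFill_fst]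
  ring

theorem sum_superWeight_filter_not_nonAttacking (μ : List ℕ) (N : ℕ) :
    ∑ f ∈ Finset.univ.filter (fun f : {u // u ∈ cells μ} → Fin N × Bool =>
      ¬ NonAttacking μ (superFill μ f)), superWeight μ N f = 0 := by
  refine Finset.sum_involution (fun f _ => superInvolution f)
    (fun f hf => superWeight_add_superWeight_superInvolution f (Finset.mem_filter.mp hf).2)
    (fun f hf _ => flipFill_ne f
      (isLastRepeatCell_of_not_nonAttacking (Finset.mem_filter.mp hf).2).1.1)
    (fun f hf => ?_) (fun f _ => superInvolution_superInvolution f)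
  simpa [nonAttacking_superInvolution_iff] using hf

end SuperFill

theorem psi_cancellation_to_nonattacking_general (μ : List ℕ)
    (N : ℕ) :
    ∑ f : {u // u ∈ cells μ} → Fin N × Bool,
      ((-1 : MvPolynomial (Fin N) (MvPolynomial (Fin 2) ℤ)) ^ negCount μ (superFill μ f) *
        C ((X 0 : MvPolynomial (Fin 2) ℤ) ^
              (posCount μ (superFill μ f) + invStat μ (IndOf lt1) (superFill μ f)) *
           (X 1 : MvPolynomial (Fin 2) ℤ) ^ majStat μ (IndOf lt1) (superFill μ f)) *
        ∏ u, X ((f u).1))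
    = ∑ f ∈ Finset.univ.filter (fun f : {u // u ∈ cells μ} → Fin N × Bool =>
          NonAttacking μ (superFill μ f)),
        ((-1 : MvPolynomial (Fin N) (MvPolynomial (Fin 2) ℤ)) ^ negCount μ (superFill μ f) *
          C ((X 0 : MvPolynomial (Fin 2) ℤ) ^
                (posCount μ (superFill μ f) + invStat μ (IndOf lt1) (superFill μ f)) *
             (X 1 : MvPolynomial (Fin 2) ℤ) ^ majStat μ (IndOf lt1) (superFill μ f)) *
          ∏ u, X ((f u).1)) := by
  rw [← Finset.sum_filter_add_sum_filter_not Finset.univ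
    (fun f : {u // u ∈ cells μ} → Fin N × Bool => NonAttacking μ (superFill μ f))]
  exact add_eq_left.mpr (sum_superWeight_filter_not_nonAttacking μ N)

/-- With the order `<₁` on the super alphabet,
`Σ_σ (−1)^{m(σ)} q^{p(σ)+inv(σ)} t^{maj(σ)} x^{|σ|}` over all super fillings
`σ : dg(μ) → A` with `|σ(u)| ≤ N` equals the same sum restricted to
non-attacking super fillings. -/
theorem psi_cancellation_to_nonattacking (μ : List ℕ) (hμ : IsPartitionList μ)
    (N : ℕ) (hN : 1 ≤ N) :
    ∑ f : {u // u ∈ cells μ} → Fin N × Bool,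
      ((-1 : MvPolynomial (Fin N) (MvPolynomial (Fin 2) ℤ)) ^ negCount μ (superFill μ f) *
        C ((X 0 : MvPolynomial (Fin 2) ℤ) ^
              (posCount μ (superFill μ f) + invStat μ (IndOf lt1) (superFill μ f)) *
           (X 1 : MvPolynomial (Fin 2) ℤ) ^ majStat μ (IndOf lt1) (superFill μ f)) *
        ∏ u, X ((f u).1))
    = ∑ f ∈ Finset.univ.filter (fun f : {u // u ∈ cells μ} → Fin N × Bool =>
          NonAttacking μ (superFill μ f)),
        ((-1 : MvPolynomial (Fin N) (MvPolynomial (Fin 2) ℤ)) ^ negCount μ (superFill μ f) *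
          C ((X 0 : MvPolynomial (Fin 2) ℤ) ^
                (posCount μ (superFill μ f) + invStat μ (IndOf lt1) (superFill μ f)) *
             (X 1 : MvPolynomial (Fin 2) ℤ) ^ majStat μ (IndOf lt1) (superFill μ f)) *
          ∏ u, X ((f u).1)) :=
  psi_cancellation_to_nonattacking_general μ N

end HHL
end

section
/- Let μ be a partition and let σ : dg(μ) → A be a non-attacking super filling, i.e. |σ(u)| ≠ |σ(v)| for every pair of attacking cells u, v. Then for every j ≥ 1, the number of cells u ∈ dg(μ) with |σ(u)| ≤ j is at most μ'_1 + μ'_2 + ⋯ + μ'_j = Σ_i min(μ_i, j). In particular, if ρ is a partition of n = |μ| with ρ_k = #{u ∈ dg(μ) : |σ(u)| = k} for all k, then ρ ≤ μ' in dominance order. -/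
open Finset MvPolynomial

namespace HHL

/-!
Any two cells of a row attack each other, so a non-attacking filling puts pairwise distinct
absolute values in each row: row `i` holds at most `min(μ_i, j)` cells with `|σ(u)| ≤ j`.
Summing over rows, and double counting `μ'_1 + ⋯ + μ'_j = Σ_i min(μ_i, j)`, gives the bound;
the partial sums `ρ_1 + ⋯ + ρ_j` are exactly these cell counts.
-/

lemma bounds_of_mem_cells {μ : List ℕ} {u : ℕ × ℕ} (h : u ∈ cells μ) :
    1 ≤ u.1 ∧ u.1 ≤ μ.length ∧ 1 ≤ u.2 ∧ u.2 ≤ μ.getD (u.1 - 1) 0 := by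
  simp only [cells, mem_filter, mem_product, mem_Icc] at h
  exact ⟨h.1.1.1, h.1.1.2, h.1.2.1, h.2⟩

lemma attack_of_fst_eq {u v : ℕ × ℕ} (hrow : u.1 = v.1) (hne : u ≠ v) : Attack u v := by
  have hcol : u.2 ≠ v.2 := fun h => hne (Prod.ext hrow h)
  rcases lt_or_gt_of_ne hcol with h | h
  · exact Or.inl (Or.inl ⟨hrow, h⟩)
  · exact Or.inr (Or.inl ⟨hrow.symm, h⟩)

lemma one_le_sAbs (x : SLetter) : 1 ≤ sAbs x := Nat.le_add_left 1 x.1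

section Rows

variable {μ : List ℕ} {s : Finset (ℕ × ℕ)} {i : ℕ}

lemma card_le_getD_of_subset_row (hs : s ⊆ cells μ) (hi : ∀ u ∈ s, u.1 - 1 = i) :
    #s ≤ μ.getD i 0 := by
  calc #s ≤ #(Icc 1 (μ.getD i 0)) := by
        refine card_le_card_of_injOn Prod.snd (fun u hu => ?_) (fun u hu v hv huv => ?_)
        · have := bounds_of_mem_cells (hs hu)
          rw [hi u hu] at this
          exact mem_Icc.mpr ⟨this.2.2.1, this.2.2.2⟩
        · have := (bounds_of_mem_cells (hs hu)).1
          have := (bounds_of_mem_cells (hs hv)).1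
          have := hi u hu
          have := hi v hv
          exact Prod.ext (by omega) huv
    _ = μ.getD i 0 := Nat.card_Icc 1 _

lemma NonAttacking.card_le_of_subset_row {σ : ℕ × ℕ → SLetter} (hna : NonAttacking μ σ)
    {j : ℕ} (hs : s ⊆ cells μ) (hi : ∀ u ∈ s, u.1 - 1 = i)
    (hj : ∀ u ∈ s, sAbs (σ u) ≤ j) : #s ≤ j := by
  calc #s ≤ #(Icc 1 j) := by
        refine card_le_card_of_injOn (fun u => sAbs (σ u))
          (fun u hu => mem_Icc.mpr ⟨one_le_sAbs _, hj u hu⟩) (fun u hu v hv huv => ?_)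
        by_contra hne
        have := (bounds_of_mem_cells (hs hu)).1
        have := (bounds_of_mem_cells (hs hv)).1
        have := hi u hu
        have := hi v hv
        exact hna u (hs hu) v (hs hv) (attack_of_fst_eq (by omega) hne) huv
    _ = j := by simp

end Rows

lemma NonAttacking.card_filter_sAbs_le {μ : List ℕ} {σ : ℕ × ℕ → SLetter}
    (hna : NonAttacking μ σ) (j : ℕ) :
    #{u ∈ cells μ | sAbs (σ u) ≤ j} ≤ ∑ i ∈ range μ.length, min (μ.getD i 0) j := by
  set S := {u ∈ cells μ | sAbs (σ u) ≤ j}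
  have hS : S ⊆ cells μ := filter_subset _ _
  have hrows : #S = ∑ i ∈ range μ.length, #{u ∈ S | u.1 - 1 = i} := by
    refine card_eq_sum_card_fiberwise fun u hu => ?_
    have := bounds_of_mem_cells (hS hu)
    simp only [coe_range, Set.mem_Iio]
    omega
  rw [hrows]
  refine sum_le_sum fun i _ => le_min ?_ ?_
  · exact card_le_getD_of_subset_row ((filter_subset _ _).trans hS)
      fun u hu => (mem_filter.mp hu).2
  · exact hna.card_le_of_subset_row ((filter_subset _ _).trans hS)
      (fun u hu => (mem_filter.mp hu).2) fun u hu => (mem_filter.mp (mem_filter.mp hu).1).2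

lemma card_filter_range_succ_le (a m : ℕ) : #{j ∈ range m | j + 1 ≤ a} = min a m := by
  rw [show {j ∈ range m | j + 1 ≤ a} = range (min a m) by ext; simp; omega, card_range]

lemma sum_range_conj (μ : List ℕ) (m : ℕ) :
    ∑ j ∈ range m, conj μ (j + 1) = ∑ i ∈ range μ.length, min (μ.getD i 0) m := by
  calc ∑ j ∈ range m, conj μ (j + 1)
      = ∑ i ∈ range μ.length, #{j ∈ range m | j + 1 ≤ μ.getD i 0} :=
        (sum_card_bipartiteAbove_eq_sum_card_bipartiteBelow
          (r := fun i j => j + 1 ≤ μ.getD i 0)).symm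
    _ = _ := sum_congr rfl fun i _ => card_filter_range_succ_le _ _

lemma sum_range_card_filter_eq_succ {α : Type*} (s : Finset α) (f : α → ℕ)
    (hf : ∀ a, 1 ≤ f a) (m : ℕ) :
    ∑ k ∈ range m, #{a ∈ s | f a = k + 1} = #{a ∈ s | f a ≤ m} := by
  rw [card_eq_sum_card_fiberwise (f := fun a => f a - 1) (t := range m)]
  · refine sum_congr rfl fun k hk => congrArg card ?_
    rw [filter_filter]
    refine filter_congr fun a _ => ?_
    have := hf a
    have := mem_range.mp hk
    omega
  · intro a ha
    have := hf a
    have := (mem_filter.mp ha).2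
    simp only [coe_range, Set.mem_Iio]
    omega

theorem nonattacking_dominance_general (μ : List ℕ)
    (σ : ℕ × ℕ → SLetter) (hna : NonAttacking μ σ) :
    (∀ j, 1 ≤ j →
        ((cells μ).filter fun u => sAbs (σ u) ≤ j).card
          ≤ ∑ i ∈ Finset.range μ.length, min (μ.getD i 0) j) ∧
    ∀ ρ : List ℕ, IsPartitionList ρ → ρ.sum = μ.sum →
      (∀ k, 1 ≤ k →
        ρ.getD (k - 1) 0 = ((cells μ).filter fun u => sAbs (σ u) = k).card) →
      ∀ m, ∑ i ∈ Finset.range m, ρ.getD i 0 ≤ ∑ j ∈ Finset.range m, conj μ (j + 1) := by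
  refine ⟨fun j _ => hna.card_filter_sAbs_le j, fun ρ _ _ hρ m => ?_⟩
  calc ∑ i ∈ range m, ρ.getD i 0
      = ∑ i ∈ range m, #{u ∈ cells μ | sAbs (σ u) = i + 1} :=
        sum_congr rfl fun i _ => hρ (i + 1) i.succ_pos
    _ = #{u ∈ cells μ | sAbs (σ u) ≤ m} :=
        sum_range_card_filter_eq_succ _ _ (fun u => one_le_sAbs (σ u)) m
    _ ≤ ∑ i ∈ range μ.length, min (μ.getD i 0) m := hna.card_filter_sAbs_le m
    _ = ∑ j ∈ range m, conj μ (j + 1) := (sum_range_conj μ m).symm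

/-- If `σ : dg(μ) → A` is a non-attacking super filling, then
for every `j ≥ 1` the number of cells `u` with `|σ(u)| ≤ j` is at most
`μ'_1 + ⋯ + μ'_j = Σ_i min(μ_i, j)`; in particular, if `ρ` is a partition of
`n = |μ|` with `ρ_k = #{u : |σ(u)| = k}` for all `k`, then `ρ ≤ μ'` in
dominance order. -/
theorem nonattacking_dominance (μ : List ℕ) (hμ : IsPartitionList μ)
    (σ : ℕ × ℕ → SLetter) (hna : NonAttacking μ σ) :
    (∀ j, 1 ≤ j →
        ((cells μ).filter fun u => sAbs (σ u) ≤ j).card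
          ≤ ∑ i ∈ Finset.range μ.length, min (μ.getD i 0) j) ∧
    ∀ ρ : List ℕ, IsPartitionList ρ → ρ.sum = μ.sum →
      (∀ k, 1 ≤ k →
        ρ.getD (k - 1) 0 = ((cells μ).filter fun u => sAbs (σ u) = k).card) →
      ∀ m, ∑ i ∈ Finset.range m, ρ.getD i 0 ≤ ∑ j ∈ Finset.range m, conj μ (j + 1) :=
  nonattacking_dominance_general μ σ hna

end HHL
end
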